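/- arXiv:2311.17260 — 13 statements merged into one kernel-verified Lean document; each statement's English description precedes it below -/
import Mathlib

section
/- Let n ≥ 1 and d ≥ 1, and let F : Fin n → Fin d → ℂ be a matrix satisfying Property A. Then F has a zero row: there exists i ∈ Fin n such that F i m = 0 for all m ∈ Fin d. -/
/-!
Expanding the product of the linear forms `∑ m, F i m * x m` and grouping the tuples `j` by their
fiber cardinalities `k` writes `∏ i, ∑ m, F i m * x m` as `∑ k, x ^ k * S k`, where `S k` is exactly
the sum of Property A. Hence this product vanishes for every `x : Fin d → ℂ`; as `ℂ` is infinite,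
the product of the linear forms is the zero polynomial, and since polynomial rings are domains one of the
linear forms, i.e. one row of `F`, is zero.
-/

open Finset MvPolynomial

variable {ι κ R : Type*} [Fintype ι] [Fintype κ] [DecidableEq κ]

def fiberCard (j : ι → κ) (m : κ) : ℕ := #{i | j i = m}

theorem sum_fiberCard (j : ι → κ) : ∑ m, fiberCard j m = Fintype.card ι :=
  (card_eq_sum_card_fiberwise fun i _ => mem_univ (j i)).symm

theorem prod_comp_eq_prod_pow_fiberCard [CommMonoid R] (x : κ → R) (j : ι → κ) :
    ∏ i, x (j i) = ∏ m, x m ^ fiberCard j m := by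
  rw [← prod_fiberwise univ j]
  refine prod_congr rfl fun m _ => ?_
  rw [prod_congr rfl fun i hi => by rw [(mem_filter.mp hi).2], prod_const]
  rfl

theorem prod_sum_mul_eq_sum_fiberCard [DecidableEq ι] [CommSemiring R] (F : ι → κ → R)
    (x : κ → R) :
    ∏ i, ∑ m, F i m * x m =
      ∑ k ∈ univ.image (fiberCard (ι := ι)),
        (∏ m, x m ^ k m) * ∑ j with fiberCard j = k, ∏ i, F i (j i) := by
  rw [prod_univ_sum, Fintype.piFinset_univ,
    ← sum_fiberwise_of_maps_to fun j _ => mem_image_of_mem fiberCard (mem_univ j)]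
  refine sum_congr rfl fun k _ => ?_
  rw [mul_sum]
  refine sum_congr rfl fun j hj => ?_
  rw [prod_mul_distrib, prod_comp_eq_prod_pow_fiberCard x j, (mem_filter.mp hj).2, mul_comm]

theorem exists_forall_eq_zero_of_prod_sum_mul_eq_zero [CommRing R] [IsDomain R] [Infinite R]
    (F : ι → κ → R) (h : ∀ x : κ → R, ∏ i, ∑ m, F i m * x m = 0) :
    ∃ i, ∀ m, F i m = 0 := by
  have hP : ∏ i, ∑ m, C (F i m) * X m = (0 : MvPolynomial κ R) :=
    MvPolynomial.funext fun x => by simpa using h x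
  obtain ⟨i, -, hi⟩ := prod_eq_zero_iff.mp hP
  refine ⟨i, fun m => ?_⟩
  simpa [Pi.single_apply] using congrArg (eval (Pi.single m 1)) hi

theorem propertyA_implies_zero_row_general (n d : ℕ)
    (F : Fin n → Fin d → ℂ)
    (hA : ∀ k : Fin d → ℕ, (∑ m, k m) = n →
      (∑ j ∈ Finset.univ.filter (fun j : Fin n → Fin d =>
          ∀ m : Fin d, (Finset.univ.filter (fun i : Fin n => j i = m)).card = k m),
        ∏ i, F i (j i)) = 0) :
    ∃ i : Fin n, ∀ m : Fin d, F i m = 0 := by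
  refine exists_forall_eq_zero_of_prod_sum_mul_eq_zero F fun x => ?_
  rw [prod_sum_mul_eq_sum_fiberCard]
  refine sum_eq_zero fun k hk => ?_
  obtain ⟨j, -, rfl⟩ := mem_image.mp hk
  have hsum : ∑ m, fiberCard j m = n := by rw [sum_fiberCard, Fintype.card_fin]
  rw [filter_congr fun _ _ => funext_iff]
  exact mul_eq_zero_of_right _ (hA _ hsum)

/-- **Lemma (Property A implies a zero row).**
If `F : Fin n → Fin d → ℂ` (with `n, d ≥ 1`) satisfies Property A, i.e. for every
multiplicity vector `k : Fin d → ℕ` with `∑ m, k m = n`, the sum over all tuples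
`j : Fin n → Fin d` whose fiber over each `m` has cardinality `k m` of the products
`∏ i, F i (j i)` vanishes, then `F` has a zero row. -/
theorem propertyA_implies_zero_row (n d : ℕ) (hn : 1 ≤ n) (hd : 1 ≤ d)
    (F : Fin n → Fin d → ℂ)
    (hA : ∀ k : Fin d → ℕ, (∑ m, k m) = n →
      (∑ j ∈ Finset.univ.filter (fun j : Fin n → Fin d =>
          ∀ m : Fin d, (Finset.univ.filter (fun i : Fin n => j i = m)).card = k m),
        ∏ i, F i (j i)) = 0) :
    ∃ i : Fin n, ∀ m : Fin d, F i m = 0 :=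
  propertyA_implies_zero_row_general n d F hA
end

section
/- Let n ≥ 1, d ≥ 1, and let f₁, …, f_n : Fin d → ℂ all be nonzero functions. Let ψ be the product state ψ j = ∏_i f_i (j i). Then the symmetrization P ψ is nonzero; equivalently, ψ has a nonzero orthogonal component on the symmetric sector. -/
/-!
Pair the symmetrized vector bilinearly with a product vector `x ⊗ ⋯ ⊗ x`: every permuted copy of
`ψ` gives the same value `∏ i, f i ⬝ᵥ x`, so the pairing is `n! * ∏ i, f i ⬝ᵥ x`. Over the infinite
field `ℂ` the finitely many hyperplanes `{x | f i ⬝ᵥ x = 0}` do not cover the space, so some `x`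
makes this nonzero.
-/

open Finset

section Symmetrization

variable {ι α : Type*} [Fintype ι] [Fintype α]

theorem exists_forall_dotProduct_ne_zero {K : Type*} [Field K] [Infinite K]
    (f : ι → α → K) (hf : ∀ i, f i ≠ 0) : ∃ x : α → K, ∀ i, f i ⬝ᵥ x ≠ 0 := by
  classical
  refine Module.Dual.exists_forall_ne_zero_of_forall_exists (fun i ↦ dotProductEquiv K α (f i))
    fun i ↦ ?_
  obtain ⟨a, ha⟩ := Function.ne_iff.mp (hf i)
  exact ⟨Pi.single a 1, by simpa [dotProduct_single_one] using ha⟩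

variable [DecidableEq ι] {R : Type*} [CommSemiring R]

theorem sum_prod_apply_perm_mul_prod (f : ι → α → R) (x : α → R) (σ : Equiv.Perm ι) :
    ∑ j : ι → α, (∏ i, f i (j (σ i))) * ∏ i, x (j i) = ∏ i, f i ⬝ᵥ x := by
  have hσ (j : ι → α) : ∏ i, f i (j (σ i)) = ∏ i, f (σ.symm i) (j i) := by
    simpa using Equiv.prod_comp σ fun i ↦ f (σ.symm i) (j i)
  simp_rw [hσ, ← prod_mul_distrib]
  rw [← Fintype.prod_sum fun i a ↦ f (σ.symm i) a * x a]
  exact Equiv.prod_comp σ.symm fun i ↦ ∑ a, f i a * x a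

theorem sum_symmetrize_prod_mul_prod (f : ι → α → R) (x : α → R) :
    ∑ j : ι → α, (∑ σ : Equiv.Perm ι, ∏ i, f i (j (σ i))) * ∏ i, x (j i) =
      (Fintype.card ι).factorial * ∏ i, f i ⬝ᵥ x := by
  simp_rw [sum_mul]
  rw [sum_comm]
  simp_rw [sum_prod_apply_perm_mul_prod, sum_const, card_univ, Fintype.card_perm, nsmul_eq_mul]

theorem exists_sum_perm_prod_ne_zero {K : Type*} [Field K] [CharZero K]
    (f : ι → α → K) (hf : ∀ i, f i ≠ 0) :
    ∃ j : ι → α, ∑ σ : Equiv.Perm ι, ∏ i, f i (j (σ i)) ≠ 0 := by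
  obtain ⟨x, hx⟩ := exists_forall_dotProduct_ne_zero f hf
  by_contra! h
  have hpairing := sum_symmetrize_prod_mul_prod f x
  simp only [h, zero_mul, sum_const_zero] at hpairing
  refine mul_ne_zero ?_ (prod_ne_zero_iff.mpr fun i _ ↦ hx i) hpairing.symm
  exact Nat.cast_ne_zero.mpr (Nat.factorial_ne_zero _)

end Symmetrization

theorem symmetrization_of_product_state_ne_zero_general (n d : ℕ)
    (f : Fin n → Fin d → ℂ) (hf : ∀ i, f i ≠ 0)
    (ψ : (Fin n → Fin d) → ℂ) (hψ : ∀ j, ψ j = ∏ i, f i (j i)) :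
    (fun j : Fin n → Fin d =>
      ((1 / (Nat.factorial n : ℝ) : ℝ) : ℂ) * ∑ σ : Equiv.Perm (Fin n), ψ (j ∘ σ)) ≠ 0 := by
  obtain ⟨j, hj⟩ := exists_sum_perm_prod_ne_zero f hf
  refine Function.ne_iff.mpr ⟨j, mul_ne_zero ?_ ?_⟩
  · simp [Nat.factorial_ne_zero]
  · simpa only [hψ, Function.comp_apply] using hj

/-- **Product states have nonzero symmetrization.**
If `f 0, …, f (n-1) : Fin d → ℂ` are all nonzero and `ψ` is the product state
`ψ j = ∏ i, f i (j i)`, then the symmetrization `P ψ`, where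
`(P ψ) j = (1/n!) ∑_{σ ∈ Perm (Fin n)} ψ (j ∘ σ)`, is nonzero. -/
theorem symmetrization_of_product_state_ne_zero (n d : ℕ) (hn : 1 ≤ n) (hd : 1 ≤ d)
    (f : Fin n → Fin d → ℂ) (hf : ∀ i, f i ≠ 0)
    (ψ : (Fin n → Fin d) → ℂ) (hψ : ∀ j, ψ j = ∏ i, f i (j i)) :
    (fun j : Fin n → Fin d =>
      ((1 / (Nat.factorial n : ℝ) : ℝ) : ℂ) * ∑ σ : Equiv.Perm (Fin n), ψ (j ∘ σ)) ≠ 0 :=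
  symmetrization_of_product_state_ne_zero_general n d f hf ψ hψ
end

section
/- Let ψ₁, ψ₂, ψ₃ : Fin 2 → ℂ be unit vectors and let ψ be the product state with factors ψ₁, ψ₂, ψ₃ (so n = 3, d = 2). Then ⟪ψ, P ψ⟫ ≥ 1/4. -/
private def σp0 : Equiv.Perm (Fin 3) := ⟨![0,1,2], ![0,1,2], by decide, by decide⟩
private def σp1 : Equiv.Perm (Fin 3) := ⟨![1,0,2], ![1,0,2], by decide, by decide⟩
private def σp2 : Equiv.Perm (Fin 3) := ⟨![2,1,0], ![2,1,0], by decide, by decide⟩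
private def σp3 : Equiv.Perm (Fin 3) := ⟨![0,2,1], ![0,2,1], by decide, by decide⟩
private def σp4 : Equiv.Perm (Fin 3) := ⟨![1,2,0], ![2,0,1], by decide, by decide⟩
private def σp5 : Equiv.Perm (Fin 3) := ⟨![2,0,1], ![1,2,0], by decide, by decide⟩

private lemma permSum3 {M : Type*} [AddCommMonoid M] (g : Equiv.Perm (Fin 3) → M) :
    ∑ σ, g σ = g σp0 + g σp1 + g σp2 + g σp3 + g σp4 + g σp5 := by
  rw [show (Finset.univ : Finset (Equiv.Perm (Fin 3))) = {σp0, σp1, σp2, σp3, σp4, σp5} from by decide]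
  rw [Finset.sum_insert (by decide), Finset.sum_insert (by decide), Finset.sum_insert (by decide),
    Finset.sum_insert (by decide), Finset.sum_insert (by decide), Finset.sum_singleton]
  abel

private lemma piSum3 {M : Type*} [AddCommMonoid M] (f : (Fin 3 → Fin 2) → M) :
    ∑ j, f j = ∑ a : Fin 2, ∑ b : Fin 2, ∑ c : Fin 2, f ![a, b, c] := by
  rw [← (Fin.consEquiv fun _ => Fin 2).sum_comp, Fintype.sum_prod_type]
  refine Finset.sum_congr rfl fun a _ => ?_
  rw [← (Fin.consEquiv fun _ => Fin 2).sum_comp, Fintype.sum_prod_type]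
  refine Finset.sum_congr rfl fun b _ => ?_
  rw [← (Fin.consEquiv fun _ => Fin 2).sum_comp, Fintype.sum_prod_type]
  refine Finset.sum_congr rfl fun c _ => ?_
  rw [Fintype.sum_subsingleton _ finZeroElim]
  rfl

/-- **Lower bound for three qubits.**
For unit vectors `ψ₁ ψ₂ ψ₃ : Fin 2 → ℂ` and the product state
`ψ j = ψ₁ (j 0) · ψ₂ (j 1) · ψ₃ (j 2)` on `(ℂ²)^{⊗3}`, the squared component of `ψ`
on the symmetric sector satisfies `⟪ψ, P ψ⟫ ≥ 1/4`, where
`(P ψ) j = (1/3!) ∑_{σ ∈ Perm (Fin 3)} ψ (j ∘ σ)`. -/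
theorem three_qubit_symmetric_component_lower_bound
    (ψ₁ ψ₂ ψ₃ : Fin 2 → ℂ)
    (h₁ : ∑ m, ‖ψ₁ m‖ ^ 2 = 1) (h₂ : ∑ m, ‖ψ₂ m‖ ^ 2 = 1) (h₃ : ∑ m, ‖ψ₃ m‖ ^ 2 = 1)
    (ψ : (Fin 3 → Fin 2) → ℂ) (hψ : ∀ j, ψ j = ψ₁ (j 0) * ψ₂ (j 1) * ψ₃ (j 2))
    (Pψ : (Fin 3 → Fin 2) → ℂ)
    (hPψ : ∀ j, Pψ j = ((1 / (Nat.factorial 3 : ℝ) : ℝ) : ℂ) *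
      ∑ σ : Equiv.Perm (Fin 3), ψ (j ∘ σ)) :
    (1 / 4 : ℝ) ≤ (∑ j, (starRingEnd ℂ) (ψ j) * Pψ j).re := by
  have hz : ∀ z : ℂ, (starRingEnd ℂ) z * z = ((‖z‖ ^ 2 : ℝ) : ℂ) := by
    intro z
    rw [mul_comm, Complex.mul_conj, Complex.normSq_eq_norm_sq]
    try push_cast
    try ring
  have e1 : (starRingEnd ℂ) (ψ₁ 0) * ψ₁ 0 + (starRingEnd ℂ) (ψ₁ 1) * ψ₁ 1 = 1 := by
    rw [Fin.sum_univ_two] at h₁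
    rw [hz, hz, ← Complex.ofReal_add, h₁, Complex.ofReal_one]
  have e2 : (starRingEnd ℂ) (ψ₂ 0) * ψ₂ 0 + (starRingEnd ℂ) (ψ₂ 1) * ψ₂ 1 = 1 := by
    rw [Fin.sum_univ_two] at h₂
    rw [hz, hz, ← Complex.ofReal_add, h₂, Complex.ofReal_one]
  have e3 : (starRingEnd ℂ) (ψ₃ 0) * ψ₃ 0 + (starRingEnd ℂ) (ψ₃ 1) * ψ₃ 1 = 1 := by
    rw [Fin.sum_univ_two] at h₃
    rw [hz, hz, ← Complex.ofReal_add, h₃, Complex.ofReal_one]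
  set W : ℂ := 2 * ((starRingEnd ℂ) (ψ₁ 0) * ψ₁ 1 + (starRingEnd ℂ) (ψ₂ 0) * ψ₂ 1 +
      (starRingEnd ℂ) (ψ₃ 0) * ψ₃ 1) with hW
  set Wb : ℂ := 2 * (ψ₁ 0 * (starRingEnd ℂ) (ψ₁ 1) + ψ₂ 0 * (starRingEnd ℂ) (ψ₂ 1) +
      ψ₃ 0 * (starRingEnd ℂ) (ψ₃ 1)) with hWb
  set Z : ℂ := ((starRingEnd ℂ) (ψ₁ 0) * ψ₁ 0 - (starRingEnd ℂ) (ψ₁ 1) * ψ₁ 1) +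
      ((starRingEnd ℂ) (ψ₂ 0) * ψ₂ 0 - (starRingEnd ℂ) (ψ₂ 1) * ψ₂ 1) +
      ((starRingEnd ℂ) (ψ₃ 0) * ψ₃ 0 - (starRingEnd ℂ) (ψ₃ 1) * ψ₃ 1) with hZ
  have key : (∑ j, (starRingEnd ℂ) (ψ j) * Pψ j) = 1 / 4 + (W * Wb + Z ^ 2) / 12 := by
    simp only [hPψ, permSum3, hψ, piSum3, Fin.sum_univ_two, Function.comp_apply, σp0, σp1,
      σp2, σp3, σp4, σp5, Equiv.coe_fn_mk, Matrix.cons_val_zero, Matrix.cons_val_one,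
      Matrix.head_cons, Matrix.cons_val_two, Matrix.tail_cons, Nat.factorial, map_mul, hW, hWb, hZ]
    push_cast
    linear_combination ((-1/12 : ℂ) + (1/6 : ℂ) * (ψ₃ 1) * ((starRingEnd ℂ) (ψ₃ 1)) + (-1/6 : ℂ) * (ψ₃ 0) * ((starRingEnd ℂ) (ψ₃ 0)) + (1/6 : ℂ) * (ψ₂ 1) * ((starRingEnd ℂ) (ψ₂ 1)) + (1/3 : ℂ) * (ψ₂ 1) * (ψ₃ 1) * ((starRingEnd ℂ) (ψ₂ 1)) * ((starRingEnd ℂ) (ψ₃ 1)) + (1/3 : ℂ) * (ψ₂ 1) * (ψ₃ 0) * ((starRingEnd ℂ) (ψ₂ 1)) * ((starRingEnd ℂ) (ψ₃ 0)) + (1/3 : ℂ) * (ψ₂ 1) * (ψ₃ 0) * ((starRingEnd ℂ) (ψ₂ 0)) * ((starRingEnd ℂ) (ψ₃ 1)) + (-1/6 : ℂ) * (ψ₂ 0) * ((starRingEnd ℂ) (ψ₂ 0)) + (1/3 : ℂ) * (ψ₂ 0) * (ψ₃ 1) * ((starRingEnd ℂ) (ψ₂ 1)) * ((starRingEnd ℂ)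 (ψ₃ 0)) + (1/3 : ℂ) * (ψ₂ 0) * (ψ₃ 1) * ((starRingEnd ℂ) (ψ₂ 0)) * ((starRingEnd ℂ) (ψ₃ 1)) + (1/1 : ℂ) * (ψ₂ 0) * (ψ₃ 0) * ((starRingEnd ℂ) (ψ₂ 0)) * ((starRingEnd ℂ) (ψ₃ 0)) + (-1/12 : ℂ) * (ψ₁ 1) * ((starRingEnd ℂ) (ψ₁ 1)) + (-1/12 : ℂ) * (ψ₁ 0) * ((starRingEnd ℂ) (ψ₁ 0))) * e1 + ((-1/4 : ℂ) + (1/2 : ℂ) * (ψ₃ 1) * ((starRingEnd ℂ) (ψ₃ 1)) + (5/6 : ℂ) * (ψ₃ 0) * ((starRingEnd ℂ) (ψ₃ 0)) + (-1/12 : ℂ) * (ψ₂ 1) * ((starRingEnd ℂ) (ψ₂ 1)) + (-1/12 : ℂ) * (ψ₂ 0) * ((starRingEnd ℂ) (ψ₂ 0)) + (1/3 : ℂ) * (ψ₁ 1) * ((starRingEnd ℂ) (ψ₁ 1)) + (-2/3 : ℂ) * (ψ₁ 1) * (ψ₃ 0) * ((starRingEnd ℂ) (ψ₁ 1)) * ((starRingEnd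 ℂ) (ψ₃ 0)) + (1/3 : ℂ) * (ψ₁ 1) * (ψ₃ 0) * ((starRingEnd ℂ) (ψ₁ 0)) * ((starRingEnd ℂ) (ψ₃ 1)) + (1/3 : ℂ) * (ψ₁ 0) * (ψ₃ 1) * ((starRingEnd ℂ) (ψ₁ 1)) * ((starRingEnd ℂ) (ψ₃ 0))) * e2 + ((7/12 : ℂ) + (-1/12 : ℂ) * (ψ₃ 1) * ((starRingEnd ℂ) (ψ₃ 1)) + (-1/12 : ℂ) * (ψ₃ 0) * ((starRingEnd ℂ) (ψ₃ 0)) + (-1/3 : ℂ) * (ψ₂ 1) * ((starRingEnd ℂ) (ψ₂ 1)) + (-1/3 : ℂ) * (ψ₁ 1) * ((starRingEnd ℂ) (ψ₁ 1)) + (2/3 : ℂ) * (ψ₁ 1) * (ψ₂ 1) * ((starRingEnd ℂ) (ψ₁ 1)) * ((starRingEnd ℂ) (ψ₂ 1)) + (1/3 : ℂ) * (ψ₁ 1) * (ψ₂ 0) * ((starRingEnd ℂ) (ψ₁ 0)) * ((starRingEnd ℂ) (ψ₂ 1)) + (1/3 : ℂ) * (ψ₁ 0) * (ψ₂ 1)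 * ((starRingEnd ℂ) (ψ₁ 1)) * ((starRingEnd ℂ) (ψ₂ 0))) * e3
  have hWbW : Wb = (starRingEnd ℂ) W := by
    simp only [hW, hWb, map_mul, map_add, Complex.conj_conj, map_ofNat]
    try ring
  have hZr : Z = (Z.re : ℂ) := by
    have : (starRingEnd ℂ) Z = Z := by
      simp only [hZ, map_add, map_sub, map_mul, Complex.conj_conj]
      try ring
    exact (Complex.conj_eq_iff_re.mp this).symm
  have hcast : (1 / 4 + (W * Wb + Z ^ 2) / 12 : ℂ) =
      (((1 / 4 + (Complex.normSq W + Z.re ^ 2) / 12 : ℝ)) : ℂ) := by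
    rw [hWbW, Complex.mul_conj, hZr]
    push_cast
    simp only [Complex.ofReal_re]
    try ring
  rw [key, hcast, Complex.ofReal_re]
  have h1 := Complex.normSq_nonneg W
  have h2 := sq_nonneg Z.re
  linarith
end

section
/- The lower bound 1/4 for three qubits is sharp: taking the unit vectors ψ₁ = (1, 0), ψ₂ = (cos(2π/3), sin(2π/3)), ψ₃ = (cos(π/3), sin(π/3)) in ℂ², the product state ψ with factors ψ₁, ψ₂, ψ₃ satisfies ⟪ψ, P ψ⟫ = 1/4. -/
/-!
For a product state `ψ = f₀ ⊗ ⋯ ⊗ fₙ₋₁` the overlap `⟪ψ, σ • ψ⟫` factorises as `∏ i, ⟪f (σ i), f i⟫`,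
so `⟪ψ, P ψ⟫ = perm G / n!` with `G` the Gram matrix of the factors. The three given vectors are
the unit vectors at angles `0, 2π/3, π/3`, so `G k l = cos (θ k - θ l)` has ones on the diagonal
and off-diagonal entries `-1/2, 1/2, 1/2`. Hence `perm G = 1 + 3 · 1/4 + 2 · (-1/8) = 3/2` and
`⟪ψ, P ψ⟫ = (3/2) / 3! = 1/4`.
-/

open Finset Matrix Real

section ProductState

variable {ι κ R : Type*} [Fintype ι]

def productState [CommMonoid R] (f : ι → κ → R) (j : ι → κ) : R := ∏ i, f i (j i)

variable [Fintype κ] [CommSemiring R] [StarRing R]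

def gramMatrix (f : ι → κ → R) : Matrix ι ι R :=
  Matrix.of fun k l => ∑ a, starRingEnd R (f k a) * f l a

variable [DecidableEq ι]

theorem sum_conj_productState_mul_productState_comp (f : ι → κ → R) (σ : Equiv.Perm ι) :
    ∑ j, starRingEnd R (productState f j) * productState f (j ∘ σ) =
      ∏ i, gramMatrix f (σ i) i := by
  calc ∑ j, starRingEnd R (productState f j) * productState f (j ∘ σ)
      = ∑ j : ι → κ, ∏ i, starRingEnd R (f (σ i) (j (σ i))) * f i (j (σ i)) := by
        refine sum_congr rfl fun j _ => ?_
        rw [productState, map_prod, ← Equiv.prod_comp σ, productState, ← prod_mul_distrib]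
        rfl
    _ = ∑ j : ι → κ, ∏ i, starRingEnd R (f (σ i) (j i)) * f i (j i) :=
        (σ.symm.arrowCongr (Equiv.refl κ)).sum_comp
          fun j : ι → κ => ∏ i, starRingEnd R (f (σ i) (j i)) * f i (j i)
    _ = ∏ i, gramMatrix f (σ i) i :=
        (Fintype.prod_sum fun i a => starRingEnd R (f (σ i) a) * f i a).symm

theorem sum_conj_productState_mul_sum_perm (f : ι → κ → R) :
    ∑ j, starRingEnd R (productState f j) * ∑ σ : Equiv.Perm ι, productState f (j ∘ σ) =
      (gramMatrix f).permanent := by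
  simp_rw [mul_sum]
  rw [sum_comm]
  exact sum_congr rfl fun σ _ => sum_conj_productState_mul_productState_comp f σ

end ProductState

theorem Matrix.permanent_fin_three {R : Type*} [CommSemiring R] (A : Matrix (Fin 3) (Fin 3) R) :
    A.permanent =
      A 0 0 * A 1 1 * A 2 2 + A 0 0 * A 1 2 * A 2 1
      + A 0 1 * A 1 0 * A 2 2 + A 0 1 * A 1 2 * A 2 0
      + A 0 2 * A 1 0 * A 2 1 + A 0 2 * A 1 1 * A 2 0 := by
  have huniv : (univ : Finset (Equiv.Perm (Fin 3))) =
      {1, Equiv.swap 0 1, Equiv.swap 0 2, Equiv.swap 1 2, Equiv.swap 0 1 * Equiv.swap 1 2,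
        Equiv.swap 1 2 * Equiv.swap 0 1} := by
    decide
  rw [permanent, huniv]
  simp +decide only [Fin.prod_univ_three, mem_insert, mem_singleton, not_false_eq_true, sum_insert,
    sum_singleton, Equiv.Perm.coe_one, id_eq, Equiv.Perm.coe_mul, Function.comp_apply, ne_eq,
    Equiv.swap_apply_left, Equiv.swap_apply_right, Equiv.swap_apply_of_ne_of_ne]
  ring

noncomputable def unitVector (θ : ℝ) : Fin 2 → ℂ := ![(cos θ : ℂ), (sin θ : ℂ)]

theorem gramMatrix_unitVector {ι : Type*} (θ : ι → ℝ) :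
    gramMatrix (fun k => unitVector (θ k)) = Matrix.of fun k l => (cos (θ k - θ l) : ℂ) := by
  ext k l
  simp only [gramMatrix, unitVector, of_apply, Fin.sum_univ_two, cons_val_zero, cons_val_one,
    Complex.conj_ofReal, cos_sub]
  push_cast
  ring

theorem Real.cos_two_pi_div_three : cos (2 * π / 3) = -(1 / 2) := by
  rw [show 2 * π / 3 = π - π / 3 by ring, cos_pi_sub, cos_pi_div_three]

theorem permanent_gramMatrix_unitVector_zero_two_pi_div_three_pi_div_three :
    (gramMatrix fun k => unitVector (![0, 2 * π / 3, π / 3] k)).permanent = 3 / 2 := by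
  have h₁ : 2 * π / 3 - π / 3 = π / 3 := by ring
  have h₂ : π / 3 - 2 * π / 3 = -(π / 3) := by ring
  rw [gramMatrix_unitVector, permanent_fin_three]
  simp only [of_apply, cons_val_zero, cons_val_one, Matrix.cons_val,
    sub_self, sub_zero, zero_sub, h₁, h₂, cos_neg, cos_zero, cos_two_pi_div_three, cos_pi_div_three]
  norm_num

/-- **Sharpness of the 1/4 bound for three qubits.**
For the unit vectors `ψ₁ = (1,0)`, `ψ₂ = (cos(2π/3), sin(2π/3))`,
`ψ₃ = (cos(π/3), sin(π/3))` in `ℂ²`, the product state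
`ψ j = ψ₁ (j 0) · ψ₂ (j 1) · ψ₃ (j 2)` satisfies `⟪ψ, P ψ⟫ = 1/4`, where
`(P ψ) j = (1/3!) ∑_{σ ∈ Perm (Fin 3)} ψ (j ∘ σ)`. -/
theorem three_qubit_bound_is_sharp
    (ψ₁ ψ₂ ψ₃ : Fin 2 → ℂ)
    (hψ₁ : ψ₁ = ![1, 0])
    (hψ₂ : ψ₂ = ![((Real.cos (2 * Real.pi / 3) : ℝ) : ℂ), ((Real.sin (2 * Real.pi / 3) : ℝ) : ℂ)])
    (hψ₃ : ψ₃ = ![((Real.cos (Real.pi / 3) : ℝ) : ℂ), ((Real.sin (Real.pi / 3) : ℝ) : ℂ)])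
    (ψ : (Fin 3 → Fin 2) → ℂ) (hψ : ∀ j, ψ j = ψ₁ (j 0) * ψ₂ (j 1) * ψ₃ (j 2))
    (Pψ : (Fin 3 → Fin 2) → ℂ)
    (hPψ : ∀ j, Pψ j = ((1 / (Nat.factorial 3 : ℝ) : ℝ) : ℂ) *
      ∑ σ : Equiv.Perm (Fin 3), ψ (j ∘ σ)) :
    (∑ j, (starRingEnd ℂ) (ψ j) * Pψ j) = (1 / 4 : ℂ) := by
  have hψ_eq : ψ = productState fun k => unitVector (![0, 2 * π / 3, π / 3] k) := by
    ext j
    simp only [hψ, hψ₁, hψ₂, hψ₃, productState, unitVector, Fin.prod_univ_three, cons_val_zero,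
      cons_val_one, cons_val_two, head_cons, tail_cons, cos_zero, sin_zero, Complex.ofReal_one,
      Complex.ofReal_zero]
  calc ∑ j, (starRingEnd ℂ) (ψ j) * Pψ j
      = ∑ j, (1 / 6 : ℂ) * ((starRingEnd ℂ) (ψ j) * ∑ σ : Equiv.Perm (Fin 3), ψ (j ∘ σ)) := by
        refine sum_congr rfl fun j _ => ?_
        rw [hPψ]
        norm_num [Nat.factorial]
        ring
    _ = (1 / 6 : ℂ) * (3 / 2) := by
        rw [← mul_sum, hψ_eq, sum_conj_productState_mul_sum_perm,
          permanent_gramMatrix_unitVector_zero_two_pi_div_three_pi_div_three]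
    _ = 1 / 4 := by norm_num
end

section
/- Let d ≥ 1, let ψ₁, ψ₂, ψ₃ : Fin d → ℂ be unit vectors, and let ψ be the product state with factors ψ₁, ψ₂, ψ₃ (so n = 3). Then ⟪ψ, P ψ⟫ ≥ 1/6. -/
theorem sum3' (d : ℕ) (F G H : Fin d → ℂ) :
    ∑ j : Fin 3 → Fin d, F (j 0) * G (j 1) * H (j 2)
      = (∑ m, F m) * (∑ m, G m) * (∑ m, H m) := by
  have hbij : Function.Bijective
      (fun p : Fin d × Fin d × Fin d => (![p.1, p.2.1, p.2.2] : Fin 3 → Fin d)) := by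
    rw [Function.bijective_iff_has_inverse]
    refine ⟨fun j => (j 0, j 1, j 2), fun p => by simp, fun j => by
      funext i; fin_cases i <;> simp⟩
  have key := Fintype.sum_bijective _ hbij
    (fun p : Fin d × Fin d × Fin d => F p.1 * G p.2.1 * H p.2.2)
    (fun j : Fin 3 → Fin d => F (j 0) * G (j 1) * H (j 2))
    (fun p => by simp)
  rw [← key, Fintype.sum_prod_type, Finset.sum_mul_sum]
  simp only [Fintype.sum_prod_type, Finset.sum_mul, Finset.mul_sum, mul_assoc]
  conv_rhs => rw [Finset.sum_comm]
  refine Finset.sum_congr rfl fun a _ => ?_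
  rw [Finset.sum_comm]



/-- **Lower bound for three qudits.**
For unit vectors `ψ₁ ψ₂ ψ₃ : Fin d → ℂ` (with `d ≥ 1`) and the product state
`ψ j = ψ₁ (j 0) · ψ₂ (j 1) · ψ₃ (j 2)` on `(ℂ^d)^{⊗3}`, the squared component of `ψ`
on the symmetric sector satisfies `⟪ψ, P ψ⟫ ≥ 1/6`, where
`(P ψ) j = (1/3!) ∑_{σ ∈ Perm (Fin 3)} ψ (j ∘ σ)`. -/
theorem three_qudit_symmetric_component_lower_bound (d : ℕ) (hd : 1 ≤ d)
    (ψ₁ ψ₂ ψ₃ : Fin d → ℂ)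
    (h₁ : ∑ m, ‖ψ₁ m‖ ^ 2 = 1) (h₂ : ∑ m, ‖ψ₂ m‖ ^ 2 = 1) (h₃ : ∑ m, ‖ψ₃ m‖ ^ 2 = 1)
    (ψ : (Fin 3 → Fin d) → ℂ) (hψ : ∀ j, ψ j = ψ₁ (j 0) * ψ₂ (j 1) * ψ₃ (j 2))
    (Pψ : (Fin 3 → Fin d) → ℂ)
    (hPψ : ∀ j, Pψ j = ((1 / (Nat.factorial 3 : ℝ) : ℝ) : ℂ) *
      ∑ σ : Equiv.Perm (Fin 3), ψ (j ∘ σ)) :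
    (1 / 6 : ℝ) ≤ (∑ j, (starRingEnd ℂ) (ψ j) * Pψ j).re := by
  set a : ℂ := ∑ m, (starRingEnd ℂ) (ψ₁ m) * ψ₂ m with ha
  set b : ℂ := ∑ m, (starRingEnd ℂ) (ψ₂ m) * ψ₃ m with hb
  set c : ℂ := ∑ m, (starRingEnd ℂ) (ψ₁ m) * ψ₃ m with hc
  -- self inner products equal 1
  have hs : ∀ u : Fin d → ℂ, (∑ m, ‖u m‖ ^ 2 = 1) →
      ∑ m, (starRingEnd ℂ) (u m) * u m = 1 := by
    intro u hu
    have h : ∀ m : Fin d, (starRingEnd ℂ) (u m) * u m = ((‖u m‖ ^ 2 : ℝ) : ℂ) := by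
      intro m
      rw [mul_comm, Complex.mul_conj, Complex.normSq_eq_norm_sq]
    rw [Finset.sum_congr rfl fun m _ => h m, ← Complex.ofReal_sum, hu, Complex.ofReal_one]
  have hs1 := hs ψ₁ h₁
  have hs2 := hs ψ₂ h₂
  have hs3 := hs ψ₃ h₃
  -- reversed inner products are conjugates
  have hrev : ∀ u v : Fin d → ℂ,
      ∑ m, (starRingEnd ℂ) (v m) * u m = (starRingEnd ℂ) (∑ m, (starRingEnd ℂ) (u m) * v m) := by
    intro u v
    rw [map_sum]
    exact Finset.sum_congr rfl fun m _ => by rw [map_mul, Complex.conj_conj]; ring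
  -- generic per-permutation term
  have hterm : ∀ (σ : Equiv.Perm (Fin 3)) (g₁ g₂ g₃ : Fin d → ℂ),
      (∀ j : Fin 3 → Fin d, ψ₁ (j (σ 0)) * ψ₂ (j (σ 1)) * ψ₃ (j (σ 2))
        = g₁ (j 0) * g₂ (j 1) * g₃ (j 2)) →
      ∑ j : Fin 3 → Fin d, (starRingEnd ℂ) (ψ j) * ψ (j ∘ σ)
        = (∑ m, (starRingEnd ℂ) (ψ₁ m) * g₁ m) * (∑ m, (starRingEnd ℂ) (ψ₂ m) * g₂ m)
          * (∑ m, (starRingEnd ℂ) (ψ₃ m) * g₃ m) := by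
    intro σ g₁ g₂ g₃ hg
    have h : ∀ j : Fin 3 → Fin d, (starRingEnd ℂ) (ψ j) * ψ (j ∘ σ)
        = (fun m => (starRingEnd ℂ) (ψ₁ m) * g₁ m) (j 0)
          * (fun m => (starRingEnd ℂ) (ψ₂ m) * g₂ m) (j 1)
          * (fun m => (starRingEnd ℂ) (ψ₃ m) * g₃ m) (j 2) := by
      intro j
      simp only [hψ, Function.comp_apply, map_mul]
      rw [hg j]
      ring
    rw [Finset.sum_congr rfl fun j _ => h j]
    exact sum3' d (fun m => (starRingEnd ℂ) (ψ₁ m) * g₁ m)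
      (fun m => (starRingEnd ℂ) (ψ₂ m) * g₂ m) (fun m => (starRingEnd ℂ) (ψ₃ m) * g₃ m)
  -- the six terms
  have t_id : ∑ j : Fin 3 → Fin d, (starRingEnd ℂ) (ψ j) * ψ (j ∘ (1 : Equiv.Perm (Fin 3)))
      = 1 := by
    rw [hterm 1 ψ₁ ψ₂ ψ₃ (fun j => by simp), hs1, hs2, hs3]; ring
  have t01 : ∑ j : Fin 3 → Fin d, (starRingEnd ℂ) (ψ j) * ψ (j ∘ (Equiv.swap 0 1))
      = a * (starRingEnd ℂ) a := by
    rw [hterm (Equiv.swap 0 1) ψ₂ ψ₁ ψ₃ (fun j => by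
      rw [show (Equiv.swap (0:Fin 3) 1) 0 = 1 from by decide,
          show (Equiv.swap (0:Fin 3) 1) 1 = 0 from by decide,
          show (Equiv.swap (0:Fin 3) 1) 2 = 2 from by decide]; ring), hs3, hrev ψ₁ ψ₂]
    try simp only [← ha, ← hb, ← hc]
    try ring
  have t02 : ∑ j : Fin 3 → Fin d, (starRingEnd ℂ) (ψ j) * ψ (j ∘ (Equiv.swap 0 2))
      = c * (starRingEnd ℂ) c := by
    rw [hterm (Equiv.swap 0 2) ψ₃ ψ₂ ψ₁ (fun j => by
      rw [show (Equiv.swap (0:Fin 3) 2) 0 = 2 from by decide,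
          show (Equiv.swap (0:Fin 3) 2) 1 = 1 from by decide,
          show (Equiv.swap (0:Fin 3) 2) 2 = 0 from by decide]; ring), hs2, hrev ψ₁ ψ₃]
    try simp only [← ha, ← hb, ← hc]
    try ring
  have t12 : ∑ j : Fin 3 → Fin d, (starRingEnd ℂ) (ψ j) * ψ (j ∘ (Equiv.swap 1 2))
      = b * (starRingEnd ℂ) b := by
    rw [hterm (Equiv.swap 1 2) ψ₁ ψ₃ ψ₂ (fun j => by
      rw [show (Equiv.swap (1:Fin 3) 2) 0 = 0 from by decide,
          show (Equiv.swap (1:Fin 3) 2) 1 = 2 from by decide,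
          show (Equiv.swap (1:Fin 3) 2) 2 = 1 from by decide]; ring), hs1, hrev ψ₂ ψ₃]
    try simp only [← ha, ← hb, ← hc]
    try ring
  have tr : ∑ j : Fin 3 → Fin d, (starRingEnd ℂ) (ψ j) * ψ (j ∘ (finRotate 3))
      = c * ((starRingEnd ℂ) a * (starRingEnd ℂ) b) := by
    rw [hterm (finRotate 3) ψ₃ ψ₁ ψ₂ (fun j => by
      rw [show (finRotate 3) 0 = 1 from by decide,
          show (finRotate 3) 1 = 2 from by decide,
          show (finRotate 3) 2 = 0 from by decide]; ring), hrev ψ₁ ψ₂, hrev ψ₂ ψ₃]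
    try simp only [← ha, ← hb, ← hc]
    try ring
  have tri : ∑ j : Fin 3 → Fin d, (starRingEnd ℂ) (ψ j) * ψ (j ∘ ⇑((finRotate 3)⁻¹))
      = a * b * (starRingEnd ℂ) c := by
    rw [hterm ((finRotate 3)⁻¹) ψ₂ ψ₃ ψ₁ (fun j => by
      rw [show (finRotate 3)⁻¹ (0:Fin 3) = 2 from by decide,
          show (finRotate 3)⁻¹ (1:Fin 3) = 0 from by decide,
          show (finRotate 3)⁻¹ (2:Fin 3) = 1 from by decide]; ring), hrev ψ₁ ψ₃]
    try simp only [← ha, ← hb, ← hc]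
    try ring
  -- rearrange the main sum
  have hmain : ∑ j, (starRingEnd ℂ) (ψ j) * Pψ j
      = ((1 / 6 : ℝ) : ℂ) * ∑ σ : Equiv.Perm (Fin 3),
          ∑ j : Fin 3 → Fin d, (starRingEnd ℂ) (ψ j) * ψ (j ∘ σ) := by
    simp only [hPψ]
    rw [show ((1 / (Nat.factorial 3 : ℝ) : ℝ) : ℂ) = ((1/6 : ℝ) : ℂ) by norm_num [Nat.factorial]]
    have step : ∀ j : Fin 3 → Fin d,
        (starRingEnd ℂ) (ψ j) * (((1/6 : ℝ) : ℂ) * ∑ σ : Equiv.Perm (Fin 3), ψ (j ∘ σ))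
          = ∑ σ : Equiv.Perm (Fin 3), ((1/6 : ℝ) : ℂ) * ((starRingEnd ℂ) (ψ j) * ψ (j ∘ σ)) := by
      intro j
      rw [Finset.mul_sum, Finset.mul_sum]
      exact Finset.sum_congr rfl fun σ _ => by ring
    rw [Finset.sum_congr rfl fun j _ => step j, Finset.sum_comm, Finset.mul_sum]
    exact Finset.sum_congr rfl fun σ _ => (Finset.mul_sum _ _ _).symm
  have huniv : (Finset.univ : Finset (Equiv.Perm (Fin 3))) =
      {1, Equiv.swap 0 1, Equiv.swap 0 2, Equiv.swap 1 2, finRotate 3, (finRotate 3)⁻¹} := by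
    decide
  rw [hmain, huniv]
  rw [Finset.sum_insert (by decide), Finset.sum_insert (by decide),
      Finset.sum_insert (by decide), Finset.sum_insert (by decide),
      Finset.sum_insert (by decide), Finset.sum_singleton]
  rw [t_id, t01, t02, t12, tr, tri]
  -- now the algebraic/analytic part
  set z : ℂ := a * b * (starRingEnd ℂ) c with hz
  have hE : (1 : ℂ) + (a * (starRingEnd ℂ) a + (c * (starRingEnd ℂ) c + (b * (starRingEnd ℂ) b
      + (c * ((starRingEnd ℂ) a * (starRingEnd ℂ) b) + a * b * (starRingEnd ℂ) c))))
      = ((1 + Complex.normSq a + Complex.normSq b + Complex.normSq c + 2 * z.re : ℝ) : ℂ) := by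
    have h1 := Complex.mul_conj a
    have h2 := Complex.mul_conj b
    have h3 := Complex.mul_conj c
    have h4 := Complex.add_conj z
    have h5 : (starRingEnd ℂ) z = (starRingEnd ℂ) a * (starRingEnd ℂ) b * c := by
      rw [hz, map_mul, map_mul, Complex.conj_conj]
    push_cast at h4 ⊢
    linear_combination h1 + h2 + h3 + h4 - h5
  rw [hE, ← Complex.ofReal_mul, Complex.ofReal_re]
  -- Cauchy–Schwarz bounds
  have habs : ∀ u v : Fin d → ℂ, (∑ m, ‖u m‖ ^ 2 = 1) → (∑ m, ‖v m‖ ^ 2 = 1) →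
      ‖∑ m, (starRingEnd ℂ) (u m) * v m‖ ≤ 1 := by
    intro u v hu hv
    have step1 : ‖∑ m, (starRingEnd ℂ) (u m) * v m‖ ≤ ∑ m, ‖u m‖ * ‖v m‖ := by
      refine le_trans (norm_sum_le _ _) (le_of_eq (Finset.sum_congr rfl fun m _ => ?_))
      rw [norm_mul, Complex.norm_conj]
    have step2 : (∑ m, ‖u m‖ * ‖v m‖) ^ 2 ≤ (∑ m, ‖u m‖ ^ 2) * (∑ m, ‖v m‖ ^ 2) :=
      Finset.sum_mul_sq_le_sq_mul_sq _ _ _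
    have hnn : (0:ℝ) ≤ ∑ m, ‖u m‖ * ‖v m‖ :=
      Finset.sum_nonneg fun m _ => mul_nonneg (norm_nonneg _) (norm_nonneg _)
    nlinarith [norm_nonneg (∑ m, (starRingEnd ℂ) (u m) * v m)]
  have hA := habs ψ₁ ψ₂ h₁ h₂
  have hB := habs ψ₂ ψ₃ h₂ h₃
  have hC := habs ψ₁ ψ₃ h₁ h₃
  rw [← ha] at hA
  rw [← hb] at hB
  rw [← hc] at hC
  have hzre : -(‖a‖ * ‖b‖ * ‖c‖) ≤ z.re := by
    have h6 : ‖z‖ = ‖a‖ * ‖b‖ * ‖c‖ := by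
      rw [hz, norm_mul, norm_mul, Complex.norm_conj]
    have h7 := Complex.abs_re_le_norm z
    have h8 := neg_abs_le z.re
    rw [h6] at h7
    cases abs_cases z.re with
    | inl h => linarith [h.1]
    | inr h => linarith [h.1]
  have hna : Complex.normSq a = ‖a‖ ^ 2 := (Complex.sq_norm a).symm
  have hnb : Complex.normSq b = ‖b‖ ^ 2 := (Complex.sq_norm b).symm
  have hnc : Complex.normSq c = ‖c‖ ^ 2 := (Complex.sq_norm c).symm
  have h0a := norm_nonneg a
  have h0b := norm_nonneg b
  have h0c := norm_nonneg c
  rw [hna, hnb, hnc]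
  have key1 : 0 ≤ ‖a‖ ^ 2 * (1 - ‖c‖ ^ 2) :=
    mul_nonneg (sq_nonneg _) (by nlinarith)
  nlinarith [sq_nonneg (‖a‖ * ‖c‖ - ‖b‖), key1, hzre]
end

section
/- The lower bound 1/6 for three qudits is sharp for d ≥ 3: if ψ₁, ψ₂, ψ₃ : Fin d → ℂ are pairwise orthogonal unit vectors (d ≥ 3), then the product state ψ with factors ψ₁, ψ₂, ψ₃ satisfies ⟪ψ, P ψ⟫ = 1/6. -/
/-- **Sharpness of the 1/6 bound for three qudits, `d ≥ 3`.**
If `ψ₁ ψ₂ ψ₃ : Fin d → ℂ` (with `d ≥ 3`) are pairwise orthogonal unit vectors, then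
the product state `ψ j = ψ₁ (j 0) · ψ₂ (j 1) · ψ₃ (j 2)` satisfies `⟪ψ, P ψ⟫ = 1/6`,
where `(P ψ) j = (1/3!) ∑_{σ ∈ Perm (Fin 3)} ψ (j ∘ σ)`. -/
theorem three_qudit_bound_is_sharp (d : ℕ) (hd : 3 ≤ d)
    (ψ₁ ψ₂ ψ₃ : Fin d → ℂ)
    (h₁ : ∑ m, ‖ψ₁ m‖ ^ 2 = 1) (h₂ : ∑ m, ‖ψ₂ m‖ ^ 2 = 1) (h₃ : ∑ m, ‖ψ₃ m‖ ^ 2 = 1)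
    (h₁₂ : ∑ m, (starRingEnd ℂ) (ψ₁ m) * ψ₂ m = 0)
    (h₁₃ : ∑ m, (starRingEnd ℂ) (ψ₁ m) * ψ₃ m = 0)
    (h₂₃ : ∑ m, (starRingEnd ℂ) (ψ₂ m) * ψ₃ m = 0)
    (ψ : (Fin 3 → Fin d) → ℂ) (hψ : ∀ j, ψ j = ψ₁ (j 0) * ψ₂ (j 1) * ψ₃ (j 2))
    (Pψ : (Fin 3 → Fin d) → ℂ)
    (hPψ : ∀ j, Pψ j = ((1 / (Nat.factorial 3 : ℝ) : ℝ) : ℂ) *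
      ∑ σ : Equiv.Perm (Fin 3), ψ (j ∘ σ)) :
    (∑ j, (starRingEnd ℂ) (ψ j) * Pψ j) = (1 / 6 : ℂ) := by
  classical
  set c : ℂ := ((1 / (Nat.factorial 3 : ℝ) : ℝ) : ℂ) with hc
  set Ψ : Fin 3 → Fin d → ℂ := ![ψ₁, ψ₂, ψ₃] with hΨ
  -- diagonal inner products
  have hdiag : ∀ (f : Fin d → ℂ), (∑ m, ‖f m‖ ^ 2 = 1) →
      (∑ m, (starRingEnd ℂ) (f m) * f m) = 1 := by
    intro f hf
    have : ∀ m, (starRingEnd ℂ) (f m) * f m = ((‖f m‖ ^ 2 : ℝ) : ℂ) := by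
      intro m
      rw [mul_comm, Complex.mul_conj, Complex.normSq_eq_norm_sq]
    simp_rw [this]
    rw [← Complex.ofReal_sum, hf, Complex.ofReal_one]
  have h₂₁ : (∑ m, (starRingEnd ℂ) (ψ₂ m) * ψ₁ m) = 0 := by
    have := congrArg (starRingEnd ℂ) h₁₂
    simpa [map_sum, mul_comm] using this
  have h₃₁ : (∑ m, (starRingEnd ℂ) (ψ₃ m) * ψ₁ m) = 0 := by
    have := congrArg (starRingEnd ℂ) h₁₃
    simpa [map_sum, mul_comm] using this
  have h₃₂ : (∑ m, (starRingEnd ℂ) (ψ₃ m) * ψ₂ m) = 0 := by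
    have := congrArg (starRingEnd ℂ) h₂₃
    simpa [map_sum, mul_comm] using this
  have hC : ∀ a b : Fin 3, (∑ m, (starRingEnd ℂ) (Ψ a m) * Ψ b m)
      = if a = b then 1 else 0 := by
    intro a b
    fin_cases a <;> fin_cases b <;>
      simp [Ψ, hdiag ψ₁ h₁, hdiag ψ₂ h₂, hdiag ψ₃ h₃, h₁₂, h₁₃, h₂₃, h₂₁, h₃₁, h₃₂]
  -- factorization of each permutation term
  have key : ∀ σ : Equiv.Perm (Fin 3),
      (∑ j : Fin 3 → Fin d, (starRingEnd ℂ) (ψ j) * ψ (j ∘ σ))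
        = if σ = 1 then 1 else 0 := by
    intro σ
    have reidx : ∀ j : Fin 3 → Fin d, ψ (j ∘ σ) = ∏ k, Ψ (σ⁻¹ k) (j k) := by
      intro j
      rw [← Equiv.prod_comp σ (fun k => Ψ (σ⁻¹ k) (j k))]
      simp only [Equiv.Perm.inv_def, Equiv.symm_apply_apply]
      rw [hψ, Fin.prod_univ_three]
      simp [Ψ]
    have step1 : (∑ j : Fin 3 → Fin d, (starRingEnd ℂ) (ψ j) * ψ (j ∘ σ))
        = ∑ j : Fin 3 → Fin d, ∏ k, ((starRingEnd ℂ) (Ψ k (j k)) * Ψ (σ⁻¹ k) (j k)) := by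
      refine Finset.sum_congr rfl fun j _ => ?_
      rw [reidx j, hψ j, Fin.prod_univ_three, Fin.prod_univ_three]
      simp only [Ψ, Matrix.cons_val_zero, Matrix.cons_val_one, Matrix.head_cons,
        Matrix.cons_val_two, Matrix.tail_cons, map_mul]
      ring
    rw [step1, ← Fintype.prod_sum (fun k m => (starRingEnd ℂ) (Ψ k m) * Ψ (σ⁻¹ k) m)]
    simp_rw [hC]
    by_cases hσ : σ = 1
    · subst hσ; simp
    · rw [if_neg hσ]
      obtain ⟨k, hk⟩ : ∃ k, σ k ≠ k := by
        by_contra h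
        push_neg at h
        exact hσ (Equiv.ext h)
      refine Finset.prod_eq_zero (Finset.mem_univ k) ?_
      rw [if_neg]
      intro h
      exact hk (by conv_lhs => rw [h, Equiv.Perm.inv_def, Equiv.apply_symm_apply])
  have expand : ∀ j, (starRingEnd ℂ) (ψ j) * Pψ j
      = ∑ σ : Equiv.Perm (Fin 3), c * ((starRingEnd ℂ) (ψ j) * ψ (j ∘ σ)) := by
    intro j
    rw [hPψ j, Finset.mul_sum, Finset.mul_sum]
    exact Finset.sum_congr rfl fun σ _ => by ring
  calc ∑ j, (starRingEnd ℂ) (ψ j) * Pψ j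
      = ∑ j : Fin 3 → Fin d, ∑ σ : Equiv.Perm (Fin 3),
          c * ((starRingEnd ℂ) (ψ j) * ψ (j ∘ σ)) := Finset.sum_congr rfl fun j _ => expand j
    _ = ∑ σ : Equiv.Perm (Fin 3), ∑ j : Fin 3 → Fin d,
          c * ((starRingEnd ℂ) (ψ j) * ψ (j ∘ σ)) := Finset.sum_comm
    _ = ∑ σ : Equiv.Perm (Fin 3), c * (if σ = 1 then 1 else 0) := by
        refine Finset.sum_congr rfl fun σ _ => ?_
        rw [← Finset.mul_sum, key σ]
    _ = c := by simp
    _ = (1 / 6 : ℂ) := by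
        rw [hc]
        norm_num [Nat.factorial]
end

section
/- Let n ≥ 1, d ≥ 1, and let ρ be a separable density matrix on (ℂ^d)^{⊗n}. Then Tr(Π ρ) ≠ 0 (indeed its real part is strictly positive). Consequently, any density matrix ρ with Tr(Π ρ) = 0 (equivalently, annihilating every vector of the symmetric sector) is entangled. -/
open scoped ComplexOrder

namespace SepAux

variable {n d : ℕ}

def K (j l : Fin n → Fin d) : ℕ :=
  (Finset.univ.filter (fun σ : Equiv.Perm (Fin n) => j = l ∘ σ)).card

lemma K_symm (j l : Fin n → Fin d) : K j l = K l j := by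
  unfold K
  apply Finset.card_nbij (fun σ => σ⁻¹)
  · intro σ hσ
    simp only [Finset.mem_coe, Finset.mem_filter, Finset.mem_univ, true_and] at hσ ⊢
    subst hσ
    funext x; simp
  · intro a ha b hb hab
    simpa using congrArg (·⁻¹) hab
  · intro σ hσ
    simp only [Set.mem_image, Finset.mem_coe, Finset.mem_filter, Finset.mem_univ, true_and] at hσ ⊢
    refine ⟨σ⁻¹, ?_, by simp⟩
    subst hσ
    funext x; simp

lemma K_conv (j l : Fin n → Fin d) : ∑ k, K j k * K k l = n.factorial * K j l := by
  unfold K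
  simp only [Finset.card_filter]
  have step1 : ∀ k : Fin n → Fin d,
      (∑ σ : Equiv.Perm (Fin n), if j = k ∘ σ then (1:ℕ) else 0) *
      (∑ τ : Equiv.Perm (Fin n), if k = l ∘ τ then (1:ℕ) else 0)
      = ∑ σ : Equiv.Perm (Fin n), ∑ τ : Equiv.Perm (Fin n),
          (if j = k ∘ σ then (1:ℕ) else 0) * (if k = l ∘ τ then (1:ℕ) else 0) := by
    intro k; rw [Finset.sum_mul]; exact Finset.sum_congr rfl fun σ _ => Finset.mul_sum _ _ _
  simp only [step1]
  rw [Finset.sum_comm]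
  have step2 : ∀ σ : Equiv.Perm (Fin n),
      (∑ k : Fin n → Fin d, ∑ τ : Equiv.Perm (Fin n),
        (if j = k ∘ σ then (1:ℕ) else 0) * (if k = l ∘ τ then (1:ℕ) else 0))
      = ∑ τ : Equiv.Perm (Fin n), if j = l ∘ ⇑(τ * σ) then (1:ℕ) else 0 := by
    intro σ
    rw [Finset.sum_comm]
    refine Finset.sum_congr rfl fun τ _ => ?_
    rw [Finset.sum_eq_single (l ∘ ⇑τ)]
    · have : (l ∘ ⇑τ) ∘ ⇑σ = l ∘ ⇑(τ * σ) := by funext x; simp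
      simp [this]
      exact if_congr Iff.rfl rfl rfl
    · intro k _ hk
      simp only [ite_eq_right_iff, mul_eq_zero]
      exact Or.inr fun h => (hk h).elim
    · simp
  simp only [step2]
  have step3 : ∀ σ : Equiv.Perm (Fin n),
      (∑ τ : Equiv.Perm (Fin n), if j = l ∘ ⇑(τ * σ) then (1:ℕ) else 0)
      = ∑ π : Equiv.Perm (Fin n), if j = l ∘ ⇑π then (1:ℕ) else 0 := by
    intro σ
    exact Fintype.sum_equiv (Equiv.mulRight σ) _ _ (fun τ => rfl)
  simp only [step3, Finset.sum_const, Finset.card_univ, Fintype.card_perm, Fintype.card_fin,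
    smul_eq_mul]

variable (Pm : Matrix (Fin n → Fin d) (Fin n → Fin d) ℂ)
variable (hPm : ∀ j l, Pm j l = ((1 / (Nat.factorial n : ℝ) : ℝ) : ℂ) * ((K j l : ℕ) : ℂ))

lemma c_mul_fact : ((1 / (Nat.factorial n : ℝ) : ℝ) : ℂ) * (Nat.factorial n : ℂ) = 1 := by
  have h : (Nat.factorial n : ℂ) ≠ 0 := Nat.cast_ne_zero.mpr (Nat.factorial_ne_zero n)
  rw [one_div, Complex.ofReal_inv, Complex.ofReal_natCast, inv_mul_cancel₀ h]

include hPm in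
lemma Pm_herm : Pm.conjTranspose = Pm := by
  ext j l
  rw [Matrix.conjTranspose_apply, hPm l j, hPm j l, K_symm j l]
  simp [star_mul', Complex.star_def, Complex.conj_ofReal, map_natCast, mul_comm]

include hPm in
lemma Pm_idem : Pm * Pm = Pm := by
  ext j l
  rw [Matrix.mul_apply]
  simp only [hPm]
  have key : ∑ k, ((1 / (Nat.factorial n : ℝ) : ℝ) : ℂ) * (K j k : ℂ) *
      (((1 / (Nat.factorial n : ℝ) : ℝ) : ℂ) * (K k l : ℂ))
      = ((1 / (Nat.factorial n : ℝ) : ℝ) : ℂ) * ((1 / (Nat.factorial n : ℝ) : ℝ) : ℂ) *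
        ((∑ k, K j k * K k l : ℕ) : ℂ) := by
    rw [Nat.cast_sum, Finset.mul_sum]
    exact Finset.sum_congr rfl fun k _ => by rw [Nat.cast_mul]; ring
  rw [key, K_conv, Nat.cast_mul]
  rw [show ((1 / (Nat.factorial n : ℝ) : ℝ) : ℂ) * ((1 / (Nat.factorial n : ℝ) : ℝ) : ℂ) *
      ((Nat.factorial n : ℂ) * (K j l : ℂ))
    = (((1 / (Nat.factorial n : ℝ) : ℝ) : ℂ) * (Nat.factorial n : ℂ)) *
      (((1 / (Nat.factorial n : ℝ) : ℝ) : ℂ) * (K j l : ℂ)) from by ring, c_mul_fact, one_mul]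

include hPm in
lemma Pm_mulVec_prod (u : Fin d → ℂ) :
    Pm.mulVec (fun j => ∏ i, u (j i)) = fun j => ∏ i, u (j i) := by
  funext j
  rw [Matrix.mulVec]
  show ∑ l, Pm j l * ∏ i, u (l i) = _
  simp only [hPm]
  have hK : ∀ l, ((K j l : ℕ) : ℂ) = ∑ σ : Equiv.Perm (Fin n), if j = l ∘ σ then (1:ℂ) else 0 := by
    intro l
    unfold K
    rw [Finset.card_filter]
    push_cast
    exact Finset.sum_congr rfl fun σ _ => by split <;> simp
  calc ∑ l, ((1 / (Nat.factorial n : ℝ) : ℝ) : ℂ) * ((K j l : ℕ) : ℂ) * ∏ i, u (l i)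
      = ((1 / (Nat.factorial n : ℝ) : ℝ) : ℂ) * ∑ l, ((K j l : ℕ) : ℂ) * ∏ i, u (l i) := by
        rw [Finset.mul_sum]
        exact Finset.sum_congr rfl fun l _ => by ring
    _ = ((1 / (Nat.factorial n : ℝ) : ℝ) : ℂ) *
        ∑ σ : Equiv.Perm (Fin n), ∑ l, (if j = l ∘ σ then (1:ℂ) else 0) * ∏ i, u (l i) := by
        rw [Finset.sum_comm]
        congr 1
        exact Finset.sum_congr rfl fun l _ => by rw [hK l, Finset.sum_mul]
    _ = ((1 / (Nat.factorial n : ℝ) : ℝ) : ℂ) *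
        ∑ σ : Equiv.Perm (Fin n), ∏ i, u (j i) := by
        congr 1
        refine Finset.sum_congr rfl fun σ _ => ?_
        rw [Finset.sum_eq_single (j ∘ ⇑σ⁻¹)]
        · have h1 : j = (j ∘ ⇑σ⁻¹) ∘ ⇑σ := by funext x; simp
          rw [if_pos h1, one_mul]
          exact Equiv.prod_comp σ⁻¹ (fun i => u (j i))
        · intro l _ hl
          have hne : ¬ (j = l ∘ ⇑σ) := by
            intro h
            apply hl
            funext x
            have := congrFun h (σ⁻¹ x)
            simpa using this.symm
          rw [if_neg hne, zero_mul]
        · simp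
    _ = ∏ i, u (j i) := by
        rw [Finset.sum_const, Finset.card_univ, Fintype.card_perm, Fintype.card_fin,
          nsmul_eq_mul, ← mul_assoc, c_mul_fact, one_mul]

lemma exists_t (f : Fin n → Fin d → ℂ) (hf : ∀ i, ∃ m, f i m ≠ 0) :
    ∃ t : ℂ, ∀ i, (∑ m : Fin d, t ^ (m : ℕ) * f i m) ≠ 0 := by
  set P : Fin n → Polynomial ℂ := fun i => ∑ m : Fin d, Polynomial.C (f i m) * Polynomial.X ^ (m : ℕ)
    with hPdef
  have hP : ∀ i, P i ≠ 0 := by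
    intro i
    obtain ⟨m, hm⟩ := hf i
    intro h0
    have hc : (P i).coeff (m : ℕ) = f i m := by
      simp only [hPdef, Polynomial.finset_sum_coeff, Polynomial.coeff_C_mul,
        Polynomial.coeff_X_pow]
      rw [Finset.sum_eq_single m]
      · simp
      · intro b _ hb
        rw [if_neg (fun h => hb (Fin.val_injective h.symm)), mul_zero]
      · simp
    rw [h0] at hc
    simp at hc
    exact hm hc.symm
  have hfin : (⋃ i : Fin n, {x : ℂ | (P i).IsRoot x}).Finite :=
    Set.finite_iUnion fun i => Polynomial.finite_setOf_isRoot (hP i)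
  obtain ⟨t, ht⟩ := hfin.infinite_compl.nonempty
  refine ⟨t, fun i h => ?_⟩
  apply ht
  refine Set.mem_iUnion.mpr ⟨i, ?_⟩
  show (P i).eval t = 0
  rw [hPdef]
  simp only [Polynomial.eval_finset_sum, Polynomial.eval_mul, Polynomial.eval_C,
    Polynomial.eval_pow, Polynomial.eval_X]
  rw [← h]
  exact Finset.sum_congr rfl fun m _ => mul_comm _ _

lemma dot_prod_vec (t : ℂ) (f : Fin n → Fin d → ℂ) :
    dotProduct (star (fun j : Fin n → Fin d => ∏ i, (star (t ^ ((j i : ℕ))) : ℂ)))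
      (fun j : Fin n → Fin d => ∏ i, f i (j i))
      = ∏ i, ∑ m : Fin d, t ^ (m : ℕ) * f i m := by
  rw [Finset.prod_univ_sum, Fintype.piFinset_univ]
  simp only [dotProduct, Pi.star_apply, star_prod, star_star]
  exact Finset.sum_congr rfl fun j _ => (Finset.prod_mul_distrib).symm

include hPm in
lemma quad_form (x : (Fin n → Fin d) → ℂ) :
    dotProduct (star x) (Pm.mulVec x)
      = dotProduct (star (Pm.mulVec x)) (Pm.mulVec x) := by
  conv_lhs => rw [← Pm_idem Pm hPm, ← Matrix.mulVec_mulVec]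
  rw [Matrix.dotProduct_mulVec]
  congr 1
  conv_lhs => rw [← Pm_herm Pm hPm]
  rw [← Matrix.star_mulVec]

include hPm in
lemma dot_sym_vec (t : ℂ) (x : (Fin n → Fin d) → ℂ) :
    dotProduct (star (fun j : Fin n → Fin d => ∏ i, (star (t ^ ((j i : ℕ))) : ℂ)))
      (Pm.mulVec x)
      = dotProduct (star (fun j : Fin n → Fin d => ∏ i, (star (t ^ ((j i : ℕ))) : ℂ))) x := by
  rw [Matrix.dotProduct_mulVec]
  congr 1
  have h1 : Matrix.vecMul (star (fun j : Fin n → Fin d => ∏ i, (star (t ^ ((j i : ℕ))) : ℂ))) Pm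
      = star (Pm.mulVec (fun j : Fin n → Fin d => ∏ i, (star (t ^ ((j i : ℕ))) : ℂ))) := by
    rw [Matrix.star_mulVec, Pm_herm Pm hPm]
  rw [h1, Pm_mulVec_prod Pm hPm (fun m => (star (t ^ ((m : ℕ))) : ℂ))]

end SepAux

open SepAux


/-- **Separable density matrices have nonzero overlap with the symmetric sector.**
If `ρ` is a separable density matrix on `(ℂ^d)^{⊗n}` and `Pm` is the matrix of the
projection onto the symmetric sector, then `Tr(Pm ρ) ≠ 0`; indeed its real part is
strictly positive. Consequently any density matrix with `Tr(Pm ρ) = 0` is entangled. -/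
theorem separable_trace_symmetric_ne_zero (n d : ℕ) (hn : 1 ≤ n) (hd : 1 ≤ d)
    (Pm : Matrix (Fin n → Fin d) (Fin n → Fin d) ℂ)
    (hPm : ∀ j l, Pm j l = ((1 / (Nat.factorial n : ℝ) : ℝ) : ℂ) *
      ((Finset.univ.filter (fun σ : Equiv.Perm (Fin n) => j = l ∘ σ)).card : ℂ))
    (ρ : Matrix (Fin n → Fin d) (Fin n → Fin d) ℂ)
    (hρ_psd : ρ.PosSemidef) (hρ_tr : ρ.trace = 1)
    (hsep : ∃ (N : ℕ) (ω : Fin N → ℝ) (f : Fin N → Fin n → Fin d → ℂ),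
      (∀ s, 0 < ω s) ∧ (∑ s, ω s = 1) ∧
      (∀ s i, ∑ m, ‖f s i m‖ ^ 2 = 1) ∧
      ρ = ∑ s, ((ω s : ℝ) : ℂ) •
        Matrix.of (fun j l : Fin n → Fin d =>
          (∏ i, f s i (j i)) * (starRingEnd ℂ) (∏ i, f s i (l i)))) :
    (Pm * ρ).trace ≠ 0 ∧ 0 < ((Pm * ρ).trace).re := by
  obtain ⟨N, ω, f, hω, hωsum, hnorm, hρ⟩ := hsep
  have hPm' : ∀ j l, Pm j l = ((1 / (Nat.factorial n : ℝ) : ℝ) : ℂ) * ((K j l : ℕ) : ℂ) := hPm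
  have hN : 0 < N := Nat.pos_of_ne_zero (by rintro rfl; simp at hωsum)
  set v : Fin N → (Fin n → Fin d) → ℂ := fun s j => ∏ i, f s i (j i) with hv
  set y : Fin N → (Fin n → Fin d) → ℂ := fun s => Pm.mulVec (v s) with hy
  set R : Fin N → ℝ := fun s => ∑ j, Complex.normSq (y s j) with hRdef
  have htr : (Pm * ρ).trace
      = ∑ s, ((ω s : ℝ) : ℂ) * dotProduct (star (v s)) (Pm.mulVec (v s)) := by
    rw [hρ, Matrix.mul_sum, Matrix.trace_sum]
    refine Finset.sum_congr rfl fun s _ => ?_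
    rw [Matrix.mul_smul, Matrix.trace_smul, smul_eq_mul]
    congr 1
    rw [Matrix.trace]
    simp only [Matrix.diag_apply, Matrix.mul_apply, Matrix.of_apply, dotProduct,
      Matrix.mulVec, Pi.star_apply]
    refine Finset.sum_congr rfl fun j _ => ?_
    rw [Finset.mul_sum]
    refine Finset.sum_congr rfl fun k _ => ?_
    show Pm j k * (v s k * star (v s j)) = star (v s j) * (Pm j k * v s k)
    ring
  have hdot : ∀ s, dotProduct (star (v s)) (Pm.mulVec (v s)) = ((R s : ℝ) : ℂ) := by
    intro s
    rw [quad_form Pm hPm', hRdef]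
    push_cast
    simp only [dotProduct, Pi.star_apply, ← hy]
    refine Finset.sum_congr rfl fun j _ => ?_
    rw [Complex.star_def, mul_comm, Complex.mul_conj]
  have hRnn : ∀ s, 0 ≤ R s := fun s => Finset.sum_nonneg fun j _ => Complex.normSq_nonneg _
  -- the witness index
  set s₀ : Fin N := ⟨0, hN⟩ with hs₀
  have hf0 : ∀ i, ∃ m, f s₀ i m ≠ 0 := by
    intro i
    by_contra h
    push_neg at h
    have h1 := hnorm s₀ i
    simp [h] at h1
  obtain ⟨t, ht⟩ := exists_t (f s₀) hf0
  have hyne : y s₀ ≠ 0 := by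
    intro h0
    have h2 := dot_sym_vec Pm hPm' t (v s₀)
    rw [show Pm.mulVec (v s₀) = y s₀ from rfl, h0, dotProduct_zero] at h2
    rw [hv] at h2
    rw [dot_prod_vec t (f s₀)] at h2
    exact Finset.prod_ne_zero_iff.mpr (fun i _ => ht i) h2.symm
  have hRpos : 0 < R s₀ := by
    have hex : ∃ j, y s₀ j ≠ 0 := by
      by_contra h; push_neg at h; exact hyne (funext h)
    obtain ⟨j, hj⟩ := hex
    exact Finset.sum_pos' (fun j _ => Complex.normSq_nonneg _)
      ⟨j, Finset.mem_univ j, Complex.normSq_pos.mpr hj⟩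
  have htr2 : (Pm * ρ).trace = ((∑ s, ω s * R s : ℝ) : ℂ) := by
    rw [htr]
    push_cast
    exact Finset.sum_congr rfl fun s _ => by rw [hdot s]
  have hre : 0 < ((Pm * ρ).trace).re := by
    rw [htr2, Complex.ofReal_re]
    exact Finset.sum_pos' (fun s _ => mul_nonneg (hω s).le (hRnn s))
      ⟨s₀, Finset.mem_univ _, mul_pos (hω s₀) hRpos⟩
  exact ⟨fun h => by simp [h] at hre, hre⟩
end

section
/- Let d ≥ 1 and let ρ be a separable density matrix on (ℂ^d)^{⊗2} (two qudits, n = 2). Then the real part of Tr(Π ρ) is at least 1/2. Equivalently, W = Π − (1/2)·𝟙 is an entanglement witness: Tr(W ρ) ≥ 0 for all separable ρ. -/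
open scoped ComplexOrder

lemma two_qudit_aux_trace (d : ℕ)
    (Pm : Matrix (Fin 2 → Fin d) (Fin 2 → Fin d) ℂ)
    (hPm : ∀ j l, Pm j l = ((1 / (Nat.factorial 2 : ℝ) : ℝ) : ℂ) *
      ((Finset.univ.filter (fun σ : Equiv.Perm (Fin 2) => j = l ∘ σ)).card : ℂ))
    (g : Fin 2 → Fin d → ℂ) (hg : ∀ i, ∑ m, ‖g i m‖ ^ 2 = 1) :
    ∃ r : ℝ, 0 ≤ r ∧
      (Pm * Matrix.of (fun j l : Fin 2 → Fin d =>
        (∏ i, g i (j i)) * (starRingEnd ℂ) (∏ i, g i (l i)))).trace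
        = ((1/2 + r : ℝ) : ℂ) := by
  set M : Matrix (Fin 2 → Fin d) (Fin 2 → Fin d) ℂ :=
    Matrix.of (fun j l : Fin 2 → Fin d =>
      (∏ i, g i (j i)) * (starRingEnd ℂ) (∏ i, g i (l i))) with hM
  have hcard : ∀ j l : Fin 2 → Fin d,
      ((Finset.univ.filter (fun σ : Equiv.Perm (Fin 2) => j = l ∘ σ)).card : ℂ)
      = (if j = l then 1 else 0)
        + (if j ∘ ⇑(Equiv.swap (0:Fin 2) 1) = l then 1 else 0) := by
    intro j l
    have huniv : (Finset.univ : Finset (Equiv.Perm (Fin 2))) = {1, Equiv.swap 0 1} := by decide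
    rw [Finset.card_filter, huniv,
      Finset.sum_pair (by decide : (1 : Equiv.Perm (Fin 2)) ≠ Equiv.swap 0 1)]
    have h1 : (j = l ∘ ⇑(1 : Equiv.Perm (Fin 2))) ↔ j = l := by
      simp
    have h2 : (j = l ∘ ⇑(Equiv.swap (0:Fin 2) 1)) ↔ (j ∘ ⇑(Equiv.swap (0:Fin 2) 1) = l) := by
      constructor
      · intro h; funext x
        simp [h, Function.comp, Equiv.swap_apply_self]
      · intro h; funext x
        rw [← h]; simp [Function.comp, Equiv.swap_apply_self]
    simp [h1, h2, apply_ite (Nat.cast : ℕ → ℂ)]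
  have key : ∀ j : Fin 2 → Fin d, ∑ l, Pm j l * M l j
      = ((1/2 : ℝ) : ℂ) * (M j j + M (j ∘ ⇑(Equiv.swap (0:Fin 2) 1)) j) := by
    intro j
    have hfac : ((1 / (Nat.factorial 2 : ℝ) : ℝ) : ℂ) = ((1/2 : ℝ) : ℂ) := by
      norm_num [Nat.factorial]
    calc ∑ l, Pm j l * M l j
        = ∑ l, ((1/2 : ℝ) : ℂ) * (((if j = l then 1 else 0)
            + (if j ∘ ⇑(Equiv.swap (0:Fin 2) 1) = l then 1 else 0)) * M l j) := by
          refine Finset.sum_congr rfl fun l _ => ?_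
          rw [hPm j l, hcard j l, hfac, mul_assoc]
      _ = ((1/2 : ℝ) : ℂ) * ∑ l, (((if j = l then (1:ℂ) else 0) * M l j)
            + ((if j ∘ ⇑(Equiv.swap (0:Fin 2) 1) = l then (1:ℂ) else 0) * M l j)) := by
          rw [Finset.mul_sum]
          exact Finset.sum_congr rfl fun l _ => by ring
      _ = ((1/2 : ℝ) : ℂ) * (M j j + M (j ∘ ⇑(Equiv.swap (0:Fin 2) 1)) j) := by
          rw [Finset.sum_add_distrib]
          have e1 : ∑ l, (if j = l then (1:ℂ) else 0) * M l j = M j j := by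
            simp only [ite_mul, one_mul, zero_mul, Finset.sum_ite_eq, Finset.mem_univ, if_true]
          have e2 : ∑ l, (if j ∘ ⇑(Equiv.swap (0:Fin 2) 1) = l then (1:ℂ) else 0) * M l j
              = M (j ∘ ⇑(Equiv.swap (0:Fin 2) 1)) j := by
            simp only [ite_mul, one_mul, zero_mul, Finset.sum_ite_eq, Finset.mem_univ, if_true]
          rw [e1, e2]
  have htr : (Pm * M).trace = ((1/2 : ℝ) : ℂ) *
      ((∑ j, M j j) + ∑ j, M (j ∘ ⇑(Equiv.swap (0:Fin 2) 1)) j) := by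
    rw [Matrix.trace]
    simp only [Matrix.diag, Matrix.mul_apply]
    rw [Finset.sum_congr rfl fun j _ => key j, ← Finset.mul_sum, Finset.sum_add_distrib]
  -- S1 = 1
  have hterm : ∀ i, ∑ m, g i m * (starRingEnd ℂ) (g i m) = 1 := by
    intro i
    have : ∑ m, g i m * (starRingEnd ℂ) (g i m) = (((∑ m, ‖g i m‖ ^ 2 : ℝ)) : ℂ) := by
      push_cast
      refine Finset.sum_congr rfl fun m _ => ?_
      rw [Complex.mul_conj]
      norm_cast
      rw [Complex.normSq_eq_norm_sq]
    rw [this, hg i, Complex.ofReal_one]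
  have hS1 : ∑ j, M j j = 1 := by
    have : ∀ j : Fin 2 → Fin d, M j j = ∏ i, (g i (j i) * (starRingEnd ℂ) (g i (j i))) := by
      intro j
      simp only [hM, Matrix.of_apply, map_prod, Finset.prod_mul_distrib]
    rw [Finset.sum_congr rfl fun j _ => this j,
      (Fintype.prod_sum (fun (i : Fin 2) (m : Fin d) => g i m * (starRingEnd ℂ) (g i m))).symm]
    simp [hterm]
  -- S2
  set b : ℂ := ∑ m, g 1 m * (starRingEnd ℂ) (g 0 m) with hb
  have hS2 : ∑ j, M (j ∘ ⇑(Equiv.swap (0:Fin 2) 1)) j = ((Complex.normSq b : ℝ) : ℂ) := by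
    have hMj : ∀ j : Fin 2 → Fin d, M (j ∘ ⇑(Equiv.swap (0:Fin 2) 1)) j
        = ∏ i, (g (Equiv.swap (0:Fin 2) 1 i) (j i) * (starRingEnd ℂ) (g i (j i))) := by
      intro j
      have hre : (∏ i : Fin 2, g i (j (Equiv.swap (0:Fin 2) 1 i)))
          = ∏ i : Fin 2, g (Equiv.swap (0:Fin 2) 1 i) (j i) := by
        rw [← Equiv.prod_comp (Equiv.swap (0:Fin 2) 1)
          (fun i => g (Equiv.swap (0:Fin 2) 1 i) (j i))]
        exact Finset.prod_congr rfl fun i _ => by simp [Equiv.swap_apply_self]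
      simp only [hM, Matrix.of_apply, Function.comp, map_prod, Finset.prod_mul_distrib]
      rw [hre]
    rw [Finset.sum_congr rfl fun j _ => hMj j,
      (Fintype.prod_sum (fun (i : Fin 2) (m : Fin d) =>
        g (Equiv.swap (0:Fin 2) 1 i) m * (starRingEnd ℂ) (g i m))).symm]
    rw [Fin.prod_univ_two]
    have h0 : (∑ m, g (Equiv.swap (0:Fin 2) 1 0) m * (starRingEnd ℂ) (g 0 m)) = b := by
      simp [hb]
    have h1 : (∑ m, g (Equiv.swap (0:Fin 2) 1 1) m * (starRingEnd ℂ) (g 1 m))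
        = (starRingEnd ℂ) b := by
      rw [hb, map_sum]
      simp [Equiv.swap_apply_right, mul_comm]
    rw [h0, h1, Complex.mul_conj]
  refine ⟨Complex.normSq b / 2, div_nonneg (Complex.normSq_nonneg b) (by norm_num), ?_⟩
  rw [htr, hS1, hS2]
  push_cast
  ring

/-- **Entanglement witness for two qudits.**
If `ρ` is a separable density matrix on `(ℂ^d)^{⊗2}` and `Pm` is the matrix of the
projection onto the symmetric sector, then `Re Tr(Pm ρ) ≥ 1/2`; equivalently,
`W = Pm − (1/2)·𝟙` satisfies `Re Tr(W ρ) ≥ 0` for all separable `ρ`. -/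
theorem two_qudit_entanglement_witness (d : ℕ) (hd : 1 ≤ d)
    (Pm : Matrix (Fin 2 → Fin d) (Fin 2 → Fin d) ℂ)
    (hPm : ∀ j l, Pm j l = ((1 / (Nat.factorial 2 : ℝ) : ℝ) : ℂ) *
      ((Finset.univ.filter (fun σ : Equiv.Perm (Fin 2) => j = l ∘ σ)).card : ℂ))
    (ρ : Matrix (Fin 2 → Fin d) (Fin 2 → Fin d) ℂ)
    (hρ_psd : ρ.PosSemidef) (hρ_tr : ρ.trace = 1)
    (hsep : ∃ (N : ℕ) (ω : Fin N → ℝ) (f : Fin N → Fin 2 → Fin d → ℂ),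
      (∀ s, 0 < ω s) ∧ (∑ s, ω s = 1) ∧
      (∀ s i, ∑ m, ‖f s i m‖ ^ 2 = 1) ∧
      ρ = ∑ s, ((ω s : ℝ) : ℂ) •
        Matrix.of (fun j l : Fin 2 → Fin d =>
          (∏ i, f s i (j i)) * (starRingEnd ℂ) (∏ i, f s i (l i)))) :
    (1 / 2 : ℝ) ≤ ((Pm * ρ).trace).re ∧
      (0 : ℝ) ≤ (((Pm - (1 / 2 : ℂ) • (1 : Matrix (Fin 2 → Fin d) (Fin 2 → Fin d) ℂ)) * ρ).trace).re := by
  obtain ⟨N, ω, f, hωpos, hωsum, hfnorm, hρ⟩ := hsep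
  choose r hr0 hrtr using fun s => two_qudit_aux_trace d Pm hPm (f s) (hfnorm s)
  have htrace : (Pm * ρ).trace = ((∑ s, ω s * (1/2 + r s) : ℝ) : ℂ) := by
    rw [hρ, Matrix.mul_sum, Matrix.trace_sum]
    push_cast
    refine Finset.sum_congr rfl fun s _ => ?_
    rw [Matrix.mul_smul, Matrix.trace_smul, hrtr s, smul_eq_mul]
    push_cast
    ring
  have hre : ((Pm * ρ).trace).re = ∑ s, ω s * (1/2 + r s) := by
    rw [htrace, Complex.ofReal_re]
  have hge : (1 / 2 : ℝ) ≤ ∑ s, ω s * (1/2 + r s) := by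
    calc (1/2 : ℝ) = ∑ s, ω s * (1/2) := by rw [← Finset.sum_mul, hωsum, one_mul]
      _ ≤ ∑ s, ω s * (1/2 + r s) := by
          refine Finset.sum_le_sum fun s _ => ?_
          have := hr0 s
          nlinarith [(hωpos s).le]
  constructor
  · rw [hre]; exact hge
  · have : ((Pm - (1 / 2 : ℂ) • (1 : Matrix (Fin 2 → Fin d) (Fin 2 → Fin d) ℂ)) * ρ).trace
        = (Pm * ρ).trace - (1/2 : ℂ) := by
      rw [Matrix.sub_mul, Matrix.trace_sub, Matrix.smul_mul, Matrix.one_mul,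
        Matrix.trace_smul, hρ_tr, smul_eq_mul, mul_one]
    rw [this, Complex.sub_re, hre]
    have : ((1/2 : ℂ)).re = (1/2 : ℝ) := by norm_num
    rw [this]
    linarith
end

section
/- Let ρ be a separable density matrix on (ℂ²)^{⊗3} (three qubits, n = 3, d = 2). Then the real part of Tr(Π ρ) is at least 1/4. Equivalently, W = Π − (1/4)·𝟙 is an entanglement witness for three qubits: Tr(W ρ) ≥ 0 for all separable ρ. -/
set_option maxHeartbeats 2000000 in
open Complex in
lemma key_re (u0 u1 v0 v1 w0 w1 : ℂ)
    (hu : u0.re ^ 2 + u0.im ^ 2 + u1.re ^ 2 + u1.im ^ 2 = 1)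
    (hv : v0.re ^ 2 + v0.im ^ 2 + v1.re ^ 2 + v1.im ^ 2 = 1)
    (hw : w0.re ^ 2 + w0.im ^ 2 + w1.re ^ 2 + w1.im ^ 2 = 1) :
    (3/2 : ℝ) ≤ ((1 : ℂ)
      + (u0 * (starRingEnd ℂ) v0 + u1 * (starRingEnd ℂ) v1) * (starRingEnd ℂ) (u0 * (starRingEnd ℂ) v0 + u1 * (starRingEnd ℂ) v1)
      + (v0 * (starRingEnd ℂ) w0 + v1 * (starRingEnd ℂ) w1) * (starRingEnd ℂ) (v0 * (starRingEnd ℂ) w0 + v1 * (starRingEnd ℂ) w1)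
      + (w0 * (starRingEnd ℂ) u0 + w1 * (starRingEnd ℂ) u1) * (starRingEnd ℂ) (w0 * (starRingEnd ℂ) u0 + w1 * (starRingEnd ℂ) u1)
      + (u0 * (starRingEnd ℂ) v0 + u1 * (starRingEnd ℂ) v1) * (v0 * (starRingEnd ℂ) w0 + v1 * (starRingEnd ℂ) w1) * (w0 * (starRingEnd ℂ) u0 + w1 * (starRingEnd ℂ) u1)
      + (starRingEnd ℂ) (u0 * (starRingEnd ℂ) v0 + u1 * (starRingEnd ℂ) v1) * (starRingEnd ℂ) (v0 * (starRingEnd ℂ) w0 + v1 * (starRingEnd ℂ) w1) * (starRingEnd ℂ) (w0 * (starRingEnd ℂ) u0 + w1 * (starRingEnd ℂ) u1)).re := by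
  have h : ((1 : ℂ)
      + (u0 * (starRingEnd ℂ) v0 + u1 * (starRingEnd ℂ) v1) * (starRingEnd ℂ) (u0 * (starRingEnd ℂ) v0 + u1 * (starRingEnd ℂ) v1)
      + (v0 * (starRingEnd ℂ) w0 + v1 * (starRingEnd ℂ) w1) * (starRingEnd ℂ) (v0 * (starRingEnd ℂ) w0 + v1 * (starRingEnd ℂ) w1)
      + (w0 * (starRingEnd ℂ) u0 + w1 * (starRingEnd ℂ) u1) * (starRingEnd ℂ) (w0 * (starRingEnd ℂ) u0 + w1 * (starRingEnd ℂ) u1)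
      + (u0 * (starRingEnd ℂ) v0 + u1 * (starRingEnd ℂ) v1) * (v0 * (starRingEnd ℂ) w0 + v1 * (starRingEnd ℂ) w1) * (w0 * (starRingEnd ℂ) u0 + w1 * (starRingEnd ℂ) u1)
      + (starRingEnd ℂ) (u0 * (starRingEnd ℂ) v0 + u1 * (starRingEnd ℂ) v1) * (starRingEnd ℂ) (v0 * (starRingEnd ℂ) w0 + v1 * (starRingEnd ℂ) w1) * (starRingEnd ℂ) (w0 * (starRingEnd ℂ) u0 + w1 * (starRingEnd ℂ) u1)).re
      = 3/2 + ((2*(u0.re*u1.re + u0.im*u1.im) + 2*(v0.re*v1.re + v0.im*v1.im) + 2*(w0.re*w1.re + w0.im*w1.im))^2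
             + (2*(u0.re*u1.im - u0.im*u1.re) + 2*(v0.re*v1.im - v0.im*v1.re) + 2*(w0.re*w1.im - w0.im*w1.re))^2
             + ((u0.re^2+u0.im^2-u1.re^2-u1.im^2) + (v0.re^2+v0.im^2-v1.re^2-v1.im^2) + (w0.re^2+w0.im^2-w1.re^2-w1.im^2))^2)/2 := by
    simp only [map_add, map_mul, Complex.conj_conj, Complex.mul_re, Complex.mul_im,
      Complex.add_re, Complex.add_im, Complex.conj_re, Complex.conj_im,
      Complex.one_re, Complex.one_im]
    linear_combination (((-1 : ℝ)/2) + (1 : ℝ) * w1.im ^ 2 + (1 : ℝ) * w1.re ^ 2 + (1 : ℝ) * v1.im ^ 2 + (1 : ℝ) * v1.re ^ 2 + (2 : ℝ) * v0.im * v1.im * w0.im * w1.im + (2 : ℝ) * v0.im * v1.im * w0.re * w1.re + (2 : ℝ) * v0.im * v1.re * w0.im * w1.re + (-2 : ℝ) * v0.im * v1.re * w0.re * w1.im + (2 : ℝ) * v0.im ^ 2 * w0.im ^ 2 + (2 : ℝ) * v0.im ^ 2 * w0.re ^ 2 + (-2 : ℝ) * v0.re * v1.im * w0.im * w1.re + (2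 : ℝ) * v0.re * v1.im * w0.re * w1.im + (2 : ℝ) * v0.re * v1.re * w0.im * w1.im + (2 : ℝ) * v0.re * v1.re * w0.re * w1.re + (2 : ℝ) * v0.re ^ 2 * w0.im ^ 2 + (2 : ℝ) * v0.re ^ 2 * w0.re ^ 2 + ((-1 : ℝ)/2) * u1.im ^ 2 + ((-1 : ℝ)/2) * u1.re ^ 2 + ((-1 : ℝ)/2) * u0.im ^ 2 + ((-1 : ℝ)/2) * u0.re ^ 2) * hu + (((-1 : ℝ)/2) + (1 : ℝ) * w1.im ^ 2 + (1 : ℝ) * w1.re ^ 2 + (2 : ℝ) * w0.im ^ 2 + (2 : ℝ) * w0.re ^ 2 + ((-1 : ℝ)/2) * v1.im ^ 2 + ((-1 : ℝ)/2) * v1.re ^ 2 + ((-1 : ℝ)/2) * v0.im ^ 2 + ((-1 : ℝ)/2) * v0.re ^ 2 + (1 : ℝ) * u1.im ^ 2 + (-2 : ℝ) * u1.im ^ 2 * w0.im ^ 2 + (-2 : ℝ) * u1.im ^ 2 * w0.re ^ 2 + (1 : ℝ) * u1.re ^ 2 + (-2 : ℝ) * u1.re ^ 2 * w0.im ^ 2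 + (-2 : ℝ) * u1.re ^ 2 * w0.re ^ 2 + (2 : ℝ) * u0.im * u1.im * w0.im * w1.im + (2 : ℝ) * u0.im * u1.im * w0.re * w1.re + (2 : ℝ) * u0.im * u1.re * w0.im * w1.re + (-2 : ℝ) * u0.im * u1.re * w0.re * w1.im + (-2 : ℝ) * u0.re * u1.im * w0.im * w1.re + (2 : ℝ) * u0.re * u1.im * w0.re * w1.im + (2 : ℝ) * u0.re * u1.re * w0.im * w1.im + (2 : ℝ) * u0.re * u1.re * w0.re * w1.re) * hv + (((3 : ℝ)/2) + ((-1 : ℝ)/2) * w1.im ^ 2 + ((-1 : ℝ)/2) * w1.re ^ 2 + ((-1 : ℝ)/2) * w0.im ^ 2 + ((-1 : ℝ)/2) * w0.re ^ 2 + (-1 : ℝ) * v1.im ^ 2 + (-1 : ℝ) * v1.re ^ 2 + (-1 : ℝ) * u1.im ^ 2 + (2 : ℝ) * u1.im ^ 2 * v1.im ^ 2 + (2 : ℝ) * u1.im ^ 2 * v1.re ^ 2 + (-1 : ℝ) * u1.re ^ 2 + (2 : ℝ) * u1.re ^ 2 * v1.im ^ 2 + (2 : ℝ) * u1.re ^ 2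 * v1.re ^ 2 + (2 : ℝ) * u0.im * u1.im * v0.im * v1.im + (2 : ℝ) * u0.im * u1.im * v0.re * v1.re + (2 : ℝ) * u0.im * u1.re * v0.im * v1.re + (-2 : ℝ) * u0.im * u1.re * v0.re * v1.im + (-2 : ℝ) * u0.re * u1.im * v0.im * v1.re + (2 : ℝ) * u0.re * u1.im * v0.re * v1.im + (2 : ℝ) * u0.re * u1.re * v0.im * v1.im + (2 : ℝ) * u0.re * u1.re * v0.re * v1.re) * hw
  rw [h]
  linarith [sq_nonneg (2*(u0.re*u1.re + u0.im*u1.im) + 2*(v0.re*v1.re + v0.im*v1.im) + 2*(w0.re*w1.re + w0.im*w1.im)),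
    sq_nonneg (2*(u0.re*u1.im - u0.im*u1.re) + 2*(v0.re*v1.im - v0.im*v1.re) + 2*(w0.re*w1.im - w0.im*w1.re)),
    sq_nonneg ((u0.re^2+u0.im^2-u1.re^2-u1.im^2) + (v0.re^2+v0.im^2-v1.re^2-v1.im^2) + (w0.re^2+w0.im^2-w1.re^2-w1.im^2))]

private lemma tri_comm {α β γ : Type*} [Fintype α] [Fintype β] [Fintype γ]
    (F : α → β → γ → ℂ) :
    ∑ j : α, ∑ l : β, ∑ σ : γ, F j l σ = ∑ σ : γ, ∑ l : β, ∑ j : α, F j l σ :=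
  calc ∑ j : α, ∑ l : β, ∑ σ : γ, F j l σ
      = ∑ j : α, ∑ σ : γ, ∑ l : β, F j l σ :=
        Finset.sum_congr rfl fun _ _ => Finset.sum_comm
    _ = ∑ σ : γ, ∑ j : α, ∑ l : β, F j l σ := Finset.sum_comm
    _ = ∑ σ : γ, ∑ l : β, ∑ j : α, F j l σ :=
        Finset.sum_congr rfl fun _ _ => Finset.sum_comm


open scoped ComplexOrder

/-- **Entanglement witness for three qubits.**
If `ρ` is a separable density matrix on `(ℂ²)^{⊗3}` and `Pm` is the matrix of the
projection onto the symmetric sector, then `Re Tr(Pm ρ) ≥ 1/4`; equivalently,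
`W = Pm − (1/4)·𝟙` satisfies `Re Tr(W ρ) ≥ 0` for all separable `ρ`. -/
theorem three_qubit_entanglement_witness
    (Pm : Matrix (Fin 3 → Fin 2) (Fin 3 → Fin 2) ℂ)
    (hPm : ∀ j l, Pm j l = ((1 / (Nat.factorial 3 : ℝ) : ℝ) : ℂ) *
      ((Finset.univ.filter (fun σ : Equiv.Perm (Fin 3) => j = l ∘ σ)).card : ℂ))
    (ρ : Matrix (Fin 3 → Fin 2) (Fin 3 → Fin 2) ℂ)
    (hρ_psd : ρ.PosSemidef) (hρ_tr : ρ.trace = 1)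
    (hsep : ∃ (N : ℕ) (ω : Fin N → ℝ) (f : Fin N → Fin 3 → Fin 2 → ℂ),
      (∀ s, 0 < ω s) ∧ (∑ s, ω s = 1) ∧
      (∀ s i, ∑ m, ‖f s i m‖ ^ 2 = 1) ∧
      ρ = ∑ s, ((ω s : ℝ) : ℂ) •
        Matrix.of (fun j l : Fin 3 → Fin 2 =>
          (∏ i, f s i (j i)) * (starRingEnd ℂ) (∏ i, f s i (l i)))) :
    (1 / 4 : ℝ) ≤ ((Pm * ρ).trace).re ∧
      (0 : ℝ) ≤ (((Pm - (1 / 4 : ℂ) • (1 : Matrix (Fin 3 → Fin 2) (Fin 3 → Fin 2) ℂ)) * ρ).trace).re := by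
  obtain ⟨N, ω, f, hω, hωs, hfn, hρ⟩ := hsep
  set M : Fin N → Matrix (Fin 3 → Fin 2) (Fin 3 → Fin 2) ℂ := fun s =>
    Matrix.of (fun j l : Fin 3 → Fin 2 =>
      (∏ i, f s i (j i)) * (starRingEnd ℂ) (∏ i, f s i (l i))) with hM
  have huniv : (Finset.univ : Finset (Equiv.Perm (Fin 3))) =
      {1, Equiv.swap 0 1, Equiv.swap 0 2, Equiv.swap 1 2,
       Equiv.swap 0 1 * Equiv.swap 1 2, Equiv.swap 1 2 * Equiv.swap 0 1} := by decide
  -- per-product-state bound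
  have key : ∀ s : Fin N, (1/4 : ℝ) ≤ ((Pm * M s).trace).re := by
    intro s
    set g : Fin 3 → Fin 2 → ℂ := f s with hg
    have step1 : (Pm * M s).trace
        = ((1 / (Nat.factorial 3 : ℝ) : ℝ) : ℂ) *
          ∑ σ : Equiv.Perm (Fin 3), ∑ l : Fin 3 → Fin 2,
            (∏ i, g i (l i)) * (starRingEnd ℂ) (∏ i, g i (l (σ i))) := by
      rw [Matrix.trace]
      simp only [Matrix.diag, Matrix.mul_apply, hM, Matrix.of_apply, hPm, Finset.card_filter]
      push_cast
      simp_rw [mul_assoc, Finset.sum_mul, ite_mul, one_mul, zero_mul, ← Finset.mul_sum]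
      congr 1
      rw [tri_comm]
      refine Finset.sum_congr rfl (fun σ _ => ?_)
      refine Finset.sum_congr rfl (fun l _ => ?_)
      rw [Finset.sum_ite_eq' Finset.univ (l ∘ σ)
        (fun j => (∏ i, g i (l i)) * (starRingEnd ℂ) (∏ i, g i (j i)))]
      simp [Function.comp]
    have inner : ∀ σ : Equiv.Perm (Fin 3),
        (∑ l : Fin 3 → Fin 2, (∏ i, g i (l i)) * (starRingEnd ℂ) (∏ i, g i (l (σ i))))
          = ∏ i, ∑ m, g i m * (starRingEnd ℂ) (g (σ⁻¹ i) m) := by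
      intro σ
      have reindex : ∀ l : Fin 3 → Fin 2,
          (∏ i, g i (l (σ i))) = ∏ i, g (σ⁻¹ i) (l i) := by
        intro l
        have h := Equiv.prod_comp σ (fun k => g (σ⁻¹ k) (l k))
        simpa using h
      simp_rw [reindex, map_prod, ← Finset.prod_mul_distrib]
      rw [Finset.prod_univ_sum]
      rw [Fintype.piFinset_univ]
    have hB : ∀ i, (∑ m, g i m * (starRingEnd ℂ) (g i m)) = 1 := by
      intro i
      have h : ∑ m, ‖g i m‖ ^ 2 = 1 := by rw [hg]; exact hfn s i
      have hz : ∀ z : ℂ, z * (starRingEnd ℂ) z = ((‖z‖ ^ 2 : ℝ) : ℂ) := by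
        intro z
        rw [Complex.mul_conj, Complex.sq_norm]
      simp_rw [hz, ← Complex.ofReal_sum, h, Complex.ofReal_one]
    have htr : (Pm * M s).trace = ((1/6 : ℝ) : ℂ) * (1 + (g 0 0 * (starRingEnd ℂ) (g 1 0) + g 0 1 * (starRingEnd ℂ) (g 1 1)) * (starRingEnd ℂ) (g 0 0 * (starRingEnd ℂ) (g 1 0) + g 0 1 * (starRingEnd ℂ) (g 1 1))
      + (g 1 0 * (starRingEnd ℂ) (g 2 0) + g 1 1 * (starRingEnd ℂ) (g 2 1)) * (starRingEnd ℂ) (g 1 0 * (starRingEnd ℂ) (g 2 0) + g 1 1 * (starRingEnd ℂ) (g 2 1))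
      + (g 2 0 * (starRingEnd ℂ) (g 0 0) + g 2 1 * (starRingEnd ℂ) (g 0 1)) * (starRingEnd ℂ) (g 2 0 * (starRingEnd ℂ) (g 0 0) + g 2 1 * (starRingEnd ℂ) (g 0 1))
      + (g 0 0 * (starRingEnd ℂ) (g 1 0) + g 0 1 * (starRingEnd ℂ) (g 1 1)) * (g 1 0 * (starRingEnd ℂ) (g 2 0) + g 1 1 * (starRingEnd ℂ) (g 2 1)) * (g 2 0 * (starRingEnd ℂ) (g 0 0) + g 2 1 * (starRingEnd ℂ) (g 0 1))
      + (starRingEnd ℂ) (g 0 0 * (starRingEnd ℂ) (g 1 0) + g 0 1 * (starRingEnd ℂ) (g 1 1)) * (starRingEnd ℂ) (g 1 0 * (starRingEnd ℂ) (g 2 0) + g 1 1 * (starRingEnd ℂ) (g 2 1)) * (starRingEnd ℂ) (g 2 0 * (starRingEnd ℂ) (g 0 0) + g 2 1 * (starRingEnd ℂ) (g 0 1))) := by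
      rw [step1]
      have hfact : ((1 / (Nat.factorial 3 : ℝ) : ℝ) : ℂ) = ((1/6 : ℝ) : ℂ) := by
        norm_num [Nat.factorial]
      rw [hfact]
      congr 1
      rw [Finset.sum_congr rfl (fun σ _ => inner σ)]
      rw [show (∑ σ : Equiv.Perm (Fin 3), ∏ i, ∑ m, g i m * (starRingEnd ℂ) (g (σ⁻¹ i) m))
          = ∑ σ : Equiv.Perm (Fin 3), ∏ i, ∑ m, g i m * (starRingEnd ℂ) (g (σ i) m) from
        Equiv.sum_comp (Equiv.inv (Equiv.Perm (Fin 3)))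
          (fun σ => ∏ i, ∑ m, g i m * (starRingEnd ℂ) (g (σ i) m))]
      rw [huniv]
      rw [Finset.sum_insert (by decide), Finset.sum_insert (by decide),
        Finset.sum_insert (by decide), Finset.sum_insert (by decide),
        Finset.sum_insert (by decide), Finset.sum_singleton]
      simp only [Fin.prod_univ_three, Equiv.Perm.one_apply, Equiv.Perm.mul_apply]
      norm_num [Equiv.swap_apply_def, Fin.ext_iff]
      have hB' : ∀ i, g i 0 * (starRingEnd ℂ) (g i 0) + g i 1 * (starRingEnd ℂ) (g i 1) = 1 := by
        intro i
        rw [← Fin.sum_univ_two (f := fun m => g i m * (starRingEnd ℂ) (g i m))]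
        exact hB i
      rw [hB' 0, hB' 1, hB' 2]
      ring
    have hre : ((Pm * M s).trace).re = (1/6 : ℝ) * ((1 + (g 0 0 * (starRingEnd ℂ) (g 1 0) + g 0 1 * (starRingEnd ℂ) (g 1 1)) * (starRingEnd ℂ) (g 0 0 * (starRingEnd ℂ) (g 1 0) + g 0 1 * (starRingEnd ℂ) (g 1 1))
      + (g 1 0 * (starRingEnd ℂ) (g 2 0) + g 1 1 * (starRingEnd ℂ) (g 2 1)) * (starRingEnd ℂ) (g 1 0 * (starRingEnd ℂ) (g 2 0) + g 1 1 * (starRingEnd ℂ) (g 2 1))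
      + (g 2 0 * (starRingEnd ℂ) (g 0 0) + g 2 1 * (starRingEnd ℂ) (g 0 1)) * (starRingEnd ℂ) (g 2 0 * (starRingEnd ℂ) (g 0 0) + g 2 1 * (starRingEnd ℂ) (g 0 1))
      + (g 0 0 * (starRingEnd ℂ) (g 1 0) + g 0 1 * (starRingEnd ℂ) (g 1 1)) * (g 1 0 * (starRingEnd ℂ) (g 2 0) + g 1 1 * (starRingEnd ℂ) (g 2 1)) * (g 2 0 * (starRingEnd ℂ) (g 0 0) + g 2 1 * (starRingEnd ℂ) (g 0 1))
      + (starRingEnd ℂ) (g 0 0 * (starRingEnd ℂ) (g 1 0) + g 0 1 * (starRingEnd ℂ) (g 1 1)) * (starRingEnd ℂ) (g 1 0 * (starRingEnd ℂ) (g 2 0) + g 1 1 * (starRingEnd ℂ) (g 2 1)) * (starRingEnd ℂ) (g 2 0 * (starRingEnd ℂ) (g 0 0) + g 2 1 * (starRingEnd ℂ) (g 0 1)))).re := by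
      rw [htr, Complex.re_ofReal_mul]
    rw [hre]
    have hnorm : ∀ i, (g i 0).re ^ 2 + (g i 0).im ^ 2 + (g i 1).re ^ 2 + (g i 1).im ^ 2 = 1 := by
      intro i
      have h : ∑ m, ‖g i m‖ ^ 2 = 1 := by rw [hg]; exact hfn s i
      rw [Fin.sum_univ_two] at h
      have e : ∀ z : ℂ, ‖z‖ ^ 2 = z.re ^ 2 + z.im ^ 2 := by
        intro z
        rw [Complex.sq_norm, Complex.normSq_apply]; ring
      rw [e, e] at h
      linarith
    have hk := key_re (g 0 0) (g 0 1) (g 1 0) (g 1 1) (g 2 0) (g 2 1)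
      (hnorm 0) (hnorm 1) (hnorm 2)
    linarith
  -- combine over the convex mixture
  have hsum : ((Pm * ρ).trace).re = ∑ s, ω s * ((Pm * M s).trace).re := by
    rw [hρ, Matrix.mul_sum]
    simp_rw [Matrix.mul_smul, Matrix.trace_sum, Matrix.trace_smul]
    rw [Complex.re_sum]
    refine Finset.sum_congr rfl (fun s _ => ?_)
    rw [smul_eq_mul, Complex.re_ofReal_mul]
  have hmain : (1 / 4 : ℝ) ≤ ((Pm * ρ).trace).re := by
    rw [hsum]
    have h1 : (1 / 4 : ℝ) = ∑ s, ω s * (1/4) := by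
      rw [← Finset.sum_mul, hωs, one_mul]
    rw [h1]
    exact Finset.sum_le_sum (fun s _ => mul_le_mul_of_nonneg_left (key s) (le_of_lt (hω s)))
  refine ⟨hmain, ?_⟩
  have h2 : ((Pm - (1 / 4 : ℂ) • (1 : Matrix (Fin 3 → Fin 2) (Fin 3 → Fin 2) ℂ)) * ρ).trace
      = (Pm * ρ).trace - (1/4 : ℂ) := by
    rw [Matrix.sub_mul, Matrix.smul_mul, Matrix.one_mul, Matrix.trace_sub, Matrix.trace_smul,
      hρ_tr, smul_eq_mul, mul_one]
  rw [h2, Complex.sub_re]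
  have : ((1/4 : ℂ)).re = (1/4 : ℝ) := by norm_num
  rw [this]
  linarith
end

section
/- Let d ≥ 1 and let ρ be a separable density matrix on (ℂ^d)^{⊗3} (three qudits, n = 3). Then the real part of Tr(Π ρ) is at least 1/6. Equivalently, W = Π − (1/6)·𝟙 is an entanglement witness: Tr(W ρ) ≥ 0 for all separable ρ. -/
open Complex Finset

private noncomputable def ipf {d : ℕ} (g : Fin 3 → Fin d → ℂ) (i k : Fin 3) : ℂ :=
  ∑ m, (starRingEnd ℂ) (g i m) * g k m

private lemma ipf_diag {d : ℕ} (g : Fin 3 → Fin d → ℂ)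
    (hg : ∀ i, ∑ m, ‖g i m‖ ^ 2 = 1) (i : Fin 3) : ipf g i i = 1 := by
  have : ipf g i i = ((∑ m, ‖g i m‖ ^ 2 : ℝ) : ℂ) := by
    rw [ipf, Complex.ofReal_sum]
    exact Finset.sum_congr rfl fun m _ => by
      rw [Complex.conj_mul']; norm_cast
  rw [this, hg]; norm_num

private lemma ipf_conj {d : ℕ} (g : Fin 3 → Fin d → ℂ) (i k : Fin 3) :
    ipf g k i = (starRingEnd ℂ) (ipf g i k) := by
  simp only [ipf, map_sum, map_mul, Complex.conj_conj]
  exact Finset.sum_congr rfl fun m _ => by ring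

private lemma cs_aux {d : ℕ} (x y : EuclideanSpace ℂ (Fin d))
    (hx : ∑ m, ‖x m‖ ^ 2 = 1) (hy : ∑ m, ‖y m‖ ^ 2 = 1) :
    ‖∑ m, (starRingEnd ℂ) (x m) * y m‖ ≤ 1 := by
  have hip : ∑ m, (starRingEnd ℂ) (x m) * y m = inner (𝕜 := ℂ) x y := by
    rw [PiLp.inner_apply]
    exact Finset.sum_congr rfl fun m _ => by rw [RCLike.inner_apply]; ring
  rw [hip]
  calc ‖inner (𝕜 := ℂ) x y‖ ≤ ‖x‖ * ‖y‖ := norm_inner_le_norm x y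
    _ = 1 := by rw [EuclideanSpace.norm_eq, EuclideanSpace.norm_eq, hx, hy]; simp

private lemma ipf_norm_le {d : ℕ} (g : Fin 3 → Fin d → ℂ)
    (hg : ∀ i, ∑ m, ‖g i m‖ ^ 2 = 1) (i k : Fin 3) : ‖ipf g i k‖ ≤ 1 :=
  cs_aux (WithLp.toLp 2 (g i)) (WithLp.toLp 2 (g k)) (hg i) (hg k)

private def p0 : Equiv.Perm (Fin 3) := 1
private def p1 : Equiv.Perm (Fin 3) := ⟨![1,0,2], ![1,0,2], by decide, by decide⟩
private def p2 : Equiv.Perm (Fin 3) := ⟨![2,1,0], ![2,1,0], by decide, by decide⟩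
private def p3 : Equiv.Perm (Fin 3) := ⟨![0,2,1], ![0,2,1], by decide, by decide⟩
private def p4 : Equiv.Perm (Fin 3) := ⟨![1,2,0], ![2,0,1], by decide, by decide⟩
private def p5 : Equiv.Perm (Fin 3) := ⟨![2,0,1], ![1,2,0], by decide, by decide⟩

private def eperm : Fin 6 → Equiv.Perm (Fin 3) := ![p0, p1, p2, p3, p4, p5]

private lemma eperm_bij : Function.Bijective eperm := by decide

private lemma key_ineq {d : ℕ} (g : Fin 3 → Fin d → ℂ)
    (hg : ∀ i, ∑ m, ‖g i m‖ ^ 2 = 1) :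
    (1 : ℝ) ≤ (∑ σ : Equiv.Perm (Fin 3), ∏ i, ipf g (σ i) i).re := by
  have hsum : ∑ σ : Equiv.Perm (Fin 3), ∏ i, ipf g (σ i) i
      = ∑ k : Fin 6, ∏ i, ipf g (eperm k i) i :=
    (Fintype.sum_bijective eperm eperm_bij _ _ fun _ => rfl).symm
  set a := ipf g 0 1 with ha
  set b := ipf g 1 2 with hb
  set c := ipf g 0 2 with hc
  set z := (starRingEnd ℂ) a * (starRingEnd ℂ) b * c with hzdef
  have hS : ∑ σ : Equiv.Perm (Fin 3), ∏ i, ipf g (σ i) i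
      = 1 + ((‖a‖ ^ 2 : ℝ) : ℂ) + ((‖c‖ ^ 2 : ℝ) : ℂ) + ((‖b‖ ^ 2 : ℝ) : ℂ)
        + (z + (starRingEnd ℂ) z) := by
    rw [hsum, Fin.sum_univ_six]
    simp only [eperm, Matrix.cons_val_zero, Matrix.cons_val_one, Matrix.head_cons,
      Fin.prod_univ_three]
    have e10 : p1 0 = 1 := by decide
    have e11 : p1 1 = 0 := by decide
    have e12 : p1 2 = 2 := by decide
    have e20 : p2 0 = 2 := by decide
    have e21 : p2 1 = 1 := by decide
    have e22 : p2 2 = 0 := by decide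
    have e30 : p3 0 = 0 := by decide
    have e31 : p3 1 = 2 := by decide
    have e32 : p3 2 = 1 := by decide
    have e40 : p4 0 = 1 := by decide
    have e41 : p4 1 = 2 := by decide
    have e42 : p4 2 = 0 := by decide
    have e50 : p5 0 = 2 := by decide
    have e51 : p5 1 = 0 := by decide
    have e52 : p5 2 = 1 := by decide
    have v2 : ![p0, p1, p2, p3, p4, p5] (2:Fin 6) = p2 := rfl
    have v3 : ![p0, p1, p2, p3, p4, p5] (3:Fin 6) = p3 := rfl
    have v4 : ![p0, p1, p2, p3, p4, p5] (4:Fin 6) = p4 := rfl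
    have v5 : ![p0, p1, p2, p3, p4, p5] (5:Fin 6) = p5 := rfl
    rw [v2, v3, v4, v5, e10, e11, e12, e20, e21, e22, e30, e31, e32, e40, e41, e42, e50, e51, e52]
    have d0 := ipf_diag g hg 0
    have d1 := ipf_diag g hg 1
    have d2 := ipf_diag g hg 2
    have c10 : ipf g 1 0 = (starRingEnd ℂ) a := ipf_conj g 0 1
    have c21 : ipf g 2 1 = (starRingEnd ℂ) b := ipf_conj g 1 2
    have c20 : ipf g 2 0 = (starRingEnd ℂ) c := ipf_conj g 0 2
    simp only [p0, Equiv.Perm.coe_one, id_eq, d0, d1, d2, c10, c21, c20, ← ha, ← hb, ← hc]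
    have hnormsq : ∀ w : ℂ, ((‖w‖ ^ 2 : ℝ) : ℂ) = (starRingEnd ℂ) w * w := fun w => by
      rw [Complex.conj_mul']; push_cast; ring
    rw [hnormsq, hnormsq, hnormsq, hzdef]
    simp only [map_mul, Complex.conj_conj]
    ring
  rw [hS]
  simp only [Complex.add_re, Complex.one_re, Complex.ofReal_re, Complex.add_conj]
  have hna := ipf_norm_le g hg 0 1
  have hnb := ipf_norm_le g hg 1 2
  have hnc := ipf_norm_le g hg 0 2
  have hzre : -(‖a‖ * ‖b‖ * ‖c‖) ≤ z.re := by
    have h1 : ‖z‖ = ‖a‖ * ‖b‖ * ‖c‖ := by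
      rw [hzdef, norm_mul, norm_mul, RCLike.norm_conj, RCLike.norm_conj]
    have h2 : |z.re| ≤ ‖z‖ := Complex.abs_re_le_norm z
    rw [h1] at h2
    linarith [abs_nonneg z.re, neg_abs_le z.re]
  have h0a := norm_nonneg a
  have h0b := norm_nonneg b
  have h0c := norm_nonneg c
  rw [← ha] at hna
  rw [← hb] at hnb
  rw [← hc] at hnc
  nlinarith [sq_nonneg (‖a‖ - ‖b‖), mul_nonneg h0a h0b, mul_nonneg (mul_nonneg h0a h0b) h0c]

private lemma trace_prod {d : ℕ}
    (Pm : Matrix (Fin 3 → Fin d) (Fin 3 → Fin d) ℂ)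
    (hPm : ∀ j l, Pm j l = ((1 / (Nat.factorial 3 : ℝ) : ℝ) : ℂ) *
      ((Finset.univ.filter (fun σ : Equiv.Perm (Fin 3) => j = l ∘ σ)).card : ℂ))
    (g : Fin 3 → Fin d → ℂ) :
    (Pm * Matrix.of (fun j l : Fin 3 → Fin d =>
        (∏ i, g i (j i)) * (starRingEnd ℂ) (∏ i, g i (l i)))).trace
      = ((1 / 6 : ℝ) : ℂ) * ∑ σ : Equiv.Perm (Fin 3), ∏ i, ipf g (σ i) i := by
  set v : (Fin 3 → Fin d) → ℂ := fun j => ∏ i, g i (j i) with hv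
  have key : ∀ j l : Fin 3 → Fin d,
      Pm j l * (v l * (starRingEnd ℂ) (v j))
        = ((1 / 6 : ℝ) : ℂ) * ∑ σ : Equiv.Perm (Fin 3),
            if j = l ∘ σ then v l * (starRingEnd ℂ) (v j) else 0 := by
    intro j l
    rw [hPm j l, Finset.card_filter]
    have h6 : ((1 / (Nat.factorial 3 : ℝ) : ℝ) : ℂ) = ((1 / 6 : ℝ) : ℂ) := by
      norm_num [Nat.factorial]
    rw [h6, mul_assoc]
    congr 1
    rw [Nat.cast_sum, Finset.sum_mul]
    exact Finset.sum_congr rfl fun σ _ => by split <;> simp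
  have htr : (Pm * Matrix.of (fun j l : Fin 3 → Fin d =>
        (∏ i, g i (j i)) * (starRingEnd ℂ) (∏ i, g i (l i)))).trace
      = ∑ j : Fin 3 → Fin d, ∑ l : Fin 3 → Fin d, Pm j l * (v l * (starRingEnd ℂ) (v j)) := by
    rw [Matrix.trace]
    exact Finset.sum_congr rfl fun j _ => by
      rw [Matrix.diag_apply, Matrix.mul_apply]
      exact Finset.sum_congr rfl fun l _ => by rw [Matrix.of_apply]
  rw [htr]
  simp only [key]
  simp only [← Finset.mul_sum]
  congr 1
  rw [Finset.sum_comm]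
  have hinner : ∀ l : Fin 3 → Fin d,
      ∑ j : Fin 3 → Fin d, ∑ σ : Equiv.Perm (Fin 3),
          (if j = l ∘ σ then v l * (starRingEnd ℂ) (v j) else 0)
        = ∑ σ : Equiv.Perm (Fin 3), v l * (starRingEnd ℂ) (v (l ∘ σ)) := by
    intro l
    rw [Finset.sum_comm]
    exact Finset.sum_congr rfl fun σ _ => by
      rw [Finset.sum_ite_eq' Finset.univ (l ∘ σ) (fun j => v l * (starRingEnd ℂ) (v j))]
      simp
  simp only [hinner]
  rw [Finset.sum_comm]
  have hstep : ∀ σ : Equiv.Perm (Fin 3),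
      ∑ l : Fin 3 → Fin d, v l * (starRingEnd ℂ) (v (l ∘ σ))
        = ∏ i, ipf g (σ⁻¹ i) i := by
    intro σ
    have h1 : ∀ l : Fin 3 → Fin d, v l * (starRingEnd ℂ) (v (l ∘ σ))
        = ∏ i, (g i (l i) * (starRingEnd ℂ) (g (σ⁻¹ i) (l i))) := by
      intro l
      have h2 : (starRingEnd ℂ) (v (l ∘ σ))
          = ∏ i, (starRingEnd ℂ) (g (σ⁻¹ i) (l i)) := by
        rw [hv]
        simp only [Function.comp_apply, map_prod]
        rw [← Equiv.prod_comp σ (fun i => (starRingEnd ℂ) (g (σ⁻¹ i) (l i)))]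
        simp [Equiv.Perm.inv_def]
      rw [h2, hv, ← Finset.prod_mul_distrib]
    simp only [h1]
    rw [← Fintype.piFinset_univ,
      ← Finset.prod_univ_sum (fun _ : Fin 3 => (Finset.univ : Finset (Fin d)))
        (fun i m => g i m * (starRingEnd ℂ) (g (σ⁻¹ i) m))]
    exact Finset.prod_congr rfl fun i _ => by
      rw [ipf]
      exact Finset.sum_congr rfl fun m _ => by ring
  simp only [hstep]
  exact Equiv.sum_comp (Equiv.inv (Equiv.Perm (Fin 3))) (fun σ => ∏ i, ipf g (σ i) i)


open scoped ComplexOrder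

/-- **Entanglement witness for three qudits.**
If `ρ` is a separable density matrix on `(ℂ^d)^{⊗3}` and `Pm` is the matrix of the
projection onto the symmetric sector, then `Re Tr(Pm ρ) ≥ 1/6`; equivalently,
`W = Pm − (1/6)·𝟙` satisfies `Re Tr(W ρ) ≥ 0` for all separable `ρ`. -/
theorem three_qudit_entanglement_witness (d : ℕ) (hd : 1 ≤ d)
    (Pm : Matrix (Fin 3 → Fin d) (Fin 3 → Fin d) ℂ)
    (hPm : ∀ j l, Pm j l = ((1 / (Nat.factorial 3 : ℝ) : ℝ) : ℂ) *
      ((Finset.univ.filter (fun σ : Equiv.Perm (Fin 3) => j = l ∘ σ)).card : ℂ))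
    (ρ : Matrix (Fin 3 → Fin d) (Fin 3 → Fin d) ℂ)
    (hρ_psd : ρ.PosSemidef) (hρ_tr : ρ.trace = 1)
    (hsep : ∃ (N : ℕ) (ω : Fin N → ℝ) (f : Fin N → Fin 3 → Fin d → ℂ),
      (∀ s, 0 < ω s) ∧ (∑ s, ω s = 1) ∧
      (∀ s i, ∑ m, ‖f s i m‖ ^ 2 = 1) ∧
      ρ = ∑ s, ((ω s : ℝ) : ℂ) •
        Matrix.of (fun j l : Fin 3 → Fin d =>
          (∏ i, f s i (j i)) * (starRingEnd ℂ) (∏ i, f s i (l i)))) :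
    (1 / 6 : ℝ) ≤ ((Pm * ρ).trace).re ∧
      (0 : ℝ) ≤ (((Pm - (1 / 6 : ℂ) • (1 : Matrix (Fin 3 → Fin d) (Fin 3 → Fin d) ℂ)) * ρ).trace).re := by
  obtain ⟨N, ω, f, hωpos, hωsum, hfnorm, hρ⟩ := hsep
  have h1 : (1 / 6 : ℝ) ≤ ((Pm * ρ).trace).re := by
    have htr : (Pm * ρ).trace = ∑ s, ((ω s : ℝ) : ℂ) *
        (((1 / 6 : ℝ) : ℂ) * ∑ σ : Equiv.Perm (Fin 3), ∏ i, ipf (f s) (σ i) i) := by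
      rw [hρ, Matrix.mul_sum, Matrix.trace_sum]
      refine Finset.sum_congr rfl fun s _ => ?_
      rw [Matrix.mul_smul, Matrix.trace_smul, smul_eq_mul, trace_prod Pm hPm (f s)]
    rw [htr, Complex.re_sum]
    have hterm : ∀ s, (ω s * (1 / 6) : ℝ) ≤ (((ω s : ℝ) : ℂ) *
        (((1 / 6 : ℝ) : ℂ) * ∑ σ : Equiv.Perm (Fin 3), ∏ i, ipf (f s) (σ i) i)).re := by
      intro s
      rw [← mul_assoc, ← Complex.ofReal_mul, Complex.re_ofReal_mul]
      have hkey := key_ineq (f s) (hfnorm s)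
      have hω6 : (0 : ℝ) ≤ ω s * (1 / 6) := by
        have := (hωpos s).le; linarith
      nlinarith [(hωpos s).le]
    calc (1 / 6 : ℝ) = ∑ s, (ω s * (1 / 6) : ℝ) := by
          rw [← Finset.sum_mul, hωsum]; ring
      _ ≤ _ := Finset.sum_le_sum fun s _ => hterm s
  refine ⟨h1, ?_⟩
  have h2 : ((Pm - (1 / 6 : ℂ) • (1 : Matrix (Fin 3 → Fin d) (Fin 3 → Fin d) ℂ)) * ρ).trace
      = (Pm * ρ).trace - (1 / 6 : ℂ) := by
    rw [Matrix.sub_mul, Matrix.trace_sub, Matrix.smul_mul, Matrix.trace_smul, Matrix.one_mul,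
      hρ_tr, smul_eq_mul, mul_one]
  rw [h2, Complex.sub_re]
  have : ((1 / 6 : ℂ)).re = 1 / 6 := by norm_num
  rw [this]
  linarith
end

section
/- For n ≥ 1 and d ≥ 1, the symmetric sector of (ℂ^d)^{⊗n}, i.e. the ℂ-subspace of functions ψ : (Fin n → Fin d) → ℂ satisfying ψ (j ∘ σ) = ψ j for every permutation σ and every j, has dimension equal to the binomial coefficient (n + d − 1) choose (d − 1). -/
variable {n d : ℕ}

/-- Two tuples with the same multiset of values differ by a permutation. -/
lemma exists_comp_perm {f g : Fin n → Fin d}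
    (h : (List.ofFn f : Multiset (Fin d)) = (List.ofFn g : Multiset (Fin d))) :
    ∃ σ : Equiv.Perm (Fin n), f = g ∘ σ := by
  have h' : List.Perm (List.ofFn f) (List.ofFn g) := Multiset.coe_eq_coe.mp h
  have h1 : List.Perm (List.ofFn (f ∘ Tuple.sort f)) (List.ofFn (g ∘ Tuple.sort g)) :=
    ((Tuple.sort f).ofFn_comp_perm f).trans (h'.trans ((Tuple.sort g).ofFn_comp_perm g).symm)
  have heq : f ∘ Tuple.sort f = g ∘ Tuple.sort g :=
    List.ofFn_injective <| List.Perm.eq_of_sortedLE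
      (Tuple.monotone_sort f).sortedLE_ofFn (Tuple.monotone_sort g).sortedLE_ofFn h1
  refine ⟨(Tuple.sort g).symm.trans (Tuple.sort f) |>.symm, funext fun i => ?_⟩
  have := congrFun heq ((Tuple.sort f).symm i)
  simpa using this

noncomputable def toSym (j : Fin n → Fin d) : Sym (Fin d) n :=
  ⟨(List.ofFn j : Multiset (Fin d)), by simp⟩

lemma toSym_comp_perm (j : Fin n → Fin d) (σ : Equiv.Perm (Fin n)) :
    toSym (j ∘ σ) = toSym j :=
  Subtype.ext <| Multiset.coe_eq_coe.mpr (σ.ofFn_comp_perm j)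

lemma toSym_surjective : Function.Surjective (toSym (n := n) (d := d)) := by
  rintro ⟨s, hs⟩
  obtain ⟨l, rfl⟩ := s.exists_rep
  have hl : l.length = n := by simpa using hs
  refine ⟨fun i => l.get (Fin.cast hl.symm i), Subtype.ext ?_⟩
  simp only [toSym]
  congr 1
  subst hl
  simp [List.ofFn_get]

noncomputable def symMap : ((Sym (Fin d) n) → ℂ) →ₗ[ℂ] ((Fin n → Fin d) → ℂ) where
  toFun f := f ∘ toSym
  map_add' _ _ := rfl
  map_smul' _ _ := rfl

/-- **Dimension of the symmetric sector.**
For `n, d ≥ 1`, the subspace of functions `ψ : (Fin n → Fin d) → ℂ` invariant under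
all permutations of the `n` factors has dimension `(n + d − 1) choose (d − 1)`. -/
theorem symmetric_sector_finrank (n d : ℕ) (hn : 1 ≤ n) (hd : 1 ≤ d)
    (V : Submodule ℂ ((Fin n → Fin d) → ℂ))
    (hV : ∀ ψ : (Fin n → Fin d) → ℂ,
      ψ ∈ V ↔ ∀ σ : Equiv.Perm (Fin n), ∀ j, ψ (j ∘ σ) = ψ j) :
    Module.finrank ℂ V = Nat.choose (n + d - 1) (d - 1) := by
  have hrange : LinearMap.range (symMap (n := n) (d := d)) = V := by
    ext ψ
    rw [hV]
    constructor
    · rintro ⟨f, rfl⟩ σ j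
      simp [symMap, toSym_comp_perm]
    · intro hψ
      refine ⟨ψ ∘ Function.surjInv toSym_surjective, funext fun j => ?_⟩
      have h : toSym (Function.surjInv toSym_surjective (toSym j)) = toSym j :=
        Function.surjInv_eq toSym_surjective _
      obtain ⟨σ, hσ⟩ := exists_comp_perm (congrArg Subtype.val h)
      simp only [symMap, LinearMap.coe_mk, AddHom.coe_mk, Function.comp_apply, hσ]
      exact hψ σ j
  have hinj : Function.Injective (symMap (n := n) (d := d)) := by
    intro f g hfg
    funext s
    obtain ⟨j, rfl⟩ := toSym_surjective s
    exact congrFun hfg j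
  have := LinearMap.finrank_range_of_inj hinj
  rw [hrange] at this
  rw [this, Module.finrank_fintype_fun_eq_card, Sym.card_sym_eq_choose]
  rw [Fintype.card_fin]
  rw [show d + n - 1 = n + d - 1 by omega, ← Nat.choose_symm (by omega)]
  congr 1
  omega
end

section
/- Let X : Matrix (Fin d) (Fin d) ℂ be a unitary matrix and let Y be its n-fold Kronecker power, the matrix indexed by (Fin n → Fin d) with entries Y(j, l) = ∏_{i : Fin n} X(j i, l i). Then Y† · Π · Y = Π, where Π is the matrix of the symmetrizer and Y† the conjugate transpose of Y. -/
/-!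
The Kronecker power `X ↦ X^{⊗n}` is multiplicative and commutes with `ᴴ`, so it maps unitaries to
unitaries. Permuting the tensor factors of `X^{⊗n}` simultaneously in rows and columns only
reorders the product `∏ i, X (j i) (l i)`, so `X^{⊗n}` commutes with every factor-permutation
matrix, hence with their average `Π`. Then `YᴴΠY = YᴴYΠ = Π`.
-/

open Equiv Finset

namespace Matrix

variable {ι m R : Type*} [Fintype ι]

variable (ι) in
def kroneckerPow [CommMonoid R] (X : Matrix m m R) :
    Matrix (ι → m) (ι → m) R :=
  of fun j l => ∏ i, X (j i) (l i)

section

variable [CommMonoid R]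

@[simp]
theorem kroneckerPow_apply (X : Matrix m m R) (j l : ι → m) :
    kroneckerPow ι X j l = ∏ i, X (j i) (l i) :=
  rfl

theorem kroneckerPow_submatrix_arrowCongr (X : Matrix m m R) (σ : Perm ι) :
    (kroneckerPow ι X).submatrix (arrowCongr σ (.refl m)) (arrowCongr σ (.refl m)) =
      kroneckerPow ι X := by
  ext j l
  simpa using Equiv.prod_comp σ.symm fun i => X (j i) (l i)

end

theorem kroneckerPow_mul [CommSemiring R] [Fintype m] [DecidableEq ι] (X Z : Matrix m m R) :
    kroneckerPow ι X * kroneckerPow ι Z = kroneckerPow ι (X * Z) := by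
  ext j l
  simp only [mul_apply, kroneckerPow_apply, prod_univ_sum, Fintype.piFinset_univ,
    prod_mul_distrib]

theorem kroneckerPow_one [CommSemiring R] [DecidableEq m] [DecidableEq ι] :
    kroneckerPow ι (1 : Matrix m m R) = 1 := by
  ext j l
  simp only [kroneckerPow_apply, one_apply, prod_ite_zero, prod_const_one, funext_iff,
    mem_univ, true_implies]

theorem conjTranspose_kroneckerPow [CommSemiring R] [StarRing R] (X : Matrix m m R) :
    (kroneckerPow ι X)ᴴ = kroneckerPow ι Xᴴ := by
  ext j l
  simp [star_prod]

theorem kroneckerPow_mem_unitaryGroup [CommRing R] [StarRing R] [Fintype m] [DecidableEq m]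
    [DecidableEq ι] {X : Matrix m m R} (hX : X ∈ unitaryGroup m R) :
    kroneckerPow ι X ∈ unitaryGroup (ι → m) R := by
  rw [mem_unitaryGroup_iff', star_eq_conjTranspose, conjTranspose_kroneckerPow, kroneckerPow_mul,
    ← star_eq_conjTranspose, mem_unitaryGroup_iff'.mp hX, kroneckerPow_one]

theorem commute_permMatrix_of_submatrix_eq [Fintype m] [DecidableEq m] [Semiring R]
    {M : Matrix m m R} {e : Perm m} (h : M.submatrix e e = M) : Commute M (e.permMatrix R) := by
  rw [Commute, SemiconjBy, PEquiv.toMatrix_toPEquiv_mul, PEquiv.mul_toMatrix_toPEquiv]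
  conv_lhs => rw [← h]
  rw [submatrix_submatrix, Equiv.self_comp_symm]
  rfl

variable (ι m R) [DecidableEq ι] [DecidableEq m] [Field R]

-- `arrowCongr σ (.refl m)` permutes the tensor factors, `l ↦ l ∘ σ⁻¹`.
def symmetrizer : Matrix (ι → m) (ι → m) R :=
  ((Fintype.card ι).factorial : R)⁻¹ • ∑ σ : Perm ι, Perm.permMatrix R (arrowCongr σ (.refl m))

variable {ι m R}

theorem symmetrizer_apply (j l : ι → m) :
    symmetrizer ι m R j l =
      ((Fintype.card ι).factorial : R)⁻¹ * #{σ : Perm ι | j = l ∘ σ} := by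
  simp [symmetrizer, sum_apply, PEquiv.toMatrix_apply, ← Equiv.eq_symm_apply, funext_iff,
    sum_boole]

theorem commute_kroneckerPow_symmetrizer [Fintype m] (X : Matrix m m R) :
    Commute (kroneckerPow ι X) (symmetrizer ι m R) := by
  refine .smul_right (.sum_right _ _ _ fun σ _ => ?_) _
  exact commute_permMatrix_of_submatrix_eq (kroneckerPow_submatrix_arrowCongr X σ)

end Matrix

open Matrix

theorem star_mul_mul_self_of_commute {R : Type*} [Monoid R] [StarMul R] {u a : R}
    (hu : star u * u = 1) (h : Commute u a) : star u * a * u = a := by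
  rw [mul_assoc, ← h.eq, ← mul_assoc, hu, one_mul]

/-- **Invariance of the symmetrizer under local unitaries.**
If `X : Matrix (Fin d) (Fin d) ℂ` is unitary and `Y` is its `n`-fold Kronecker power
`Y j l = ∏ i, X (j i) (l i)`, then `Y.conjTranspose * Pm * Y = Pm`, where `Pm` is the matrix of
the symmetrizer `Pm j l = (1/n!) · #{σ ∈ Perm (Fin n) | j = l ∘ σ}`. -/
theorem kronecker_power_preserves_symmetrizer (n d : ℕ)
    (X : Matrix (Fin d) (Fin d) ℂ) (hX : X ∈ Matrix.unitaryGroup (Fin d) ℂ)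
    (Y : Matrix (Fin n → Fin d) (Fin n → Fin d) ℂ)
    (hY : ∀ j l, Y j l = ∏ i, X (j i) (l i))
    (Pm : Matrix (Fin n → Fin d) (Fin n → Fin d) ℂ)
    (hPm : ∀ j l, Pm j l = ((1 / (Nat.factorial n : ℝ) : ℝ) : ℂ) *
      ((Finset.univ.filter (fun σ : Equiv.Perm (Fin n) => j = l ∘ σ)).card : ℂ)) :
    Y.conjTranspose * Pm * Y = Pm := by
  obtain rfl : Y = kroneckerPow (Fin n) X := ext hY
  obtain rfl : Pm = symmetrizer (Fin n) (Fin d) ℂ := by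
    ext j l
    rw [hPm, symmetrizer_apply, Fintype.card_fin]
    push_cast
    rw [one_div]
  exact star_mul_mul_self_of_commute (mem_unitaryGroup_iff'.mp (kroneckerPow_mem_unitaryGroup hX))
    (commute_kroneckerPow_symmetrizer X)
end

section
/- There exist PPT entangled three-qubit states: for every p with 1/5 < p < 1/4, the generalized Werner state ρ(p) = (p/4)·Π + ((1 − p)/4)·(𝟙 − Π) is not separable, yet ρ(p)^{Γ_I} is positive semidefinite for every subset I ⊆ Fin 3. -/
open Matrix Finset
open scoped ComplexOrder


private def enc (j : Fin 3 → Fin 2) : Fin 8 := ⟨4*(j 0).val + 2*(j 1).val + (j 2).val, by omega⟩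

private def lift (A : Matrix (Fin 8) (Fin 8) ℤ) : Matrix (Fin 3 → Fin 2) (Fin 3 → Fin 2) ℤ :=
  Matrix.of fun j l => A (enc j) (enc l)

private def liftv (d : Fin 8 → ℤ) : (Fin 3 → Fin 2) → ℤ := fun j => d (enc j)

private def Km (I : Finset (Fin 3)) : Matrix (Fin 3 → Fin 2) (Fin 3 → Fin 2) ℤ :=
  Matrix.of fun j l => ((Finset.univ.filter (fun σ : Equiv.Perm (Fin 3) =>
    (fun i => if i ∈ I then l i else j i) = (fun i => if i ∈ I then j i else l i) ∘ σ)).card : ℤ)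

private lemma psd_smul {J : Type*} [Fintype J] {M : Matrix J J ℂ} (hM : M.PosSemidef)
    {r : ℝ} (hr : 0 ≤ r) : (((r : ℝ) : ℂ) • M).PosSemidef := by
  refine ⟨?_, fun x => ?_⟩
  · have h1 : ((r : ℂ) • M)ᴴ = star (r : ℂ) • Mᴴ := Matrix.conjTranspose_smul _ _
    rw [Matrix.IsHermitian, h1, hM.1.eq, Complex.star_def, Complex.conj_ofReal]
  · simpa [Finsupp.mul_sum, mul_assoc, mul_left_comm] using
      mul_nonneg (show (0:ℂ) ≤ (r:ℂ) from Complex.zero_le_real.mpr hr) (hM.2 x)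

private lemma psd_of_cert (c : ℤ) (hc : 0 < c) {E : Matrix (Fin 3 → Fin 2) (Fin 3 → Fin 2) ℤ}
    (N : Matrix (Fin 3 → Fin 2) (Fin 3 → Fin 2) ℤ) (d : (Fin 3 → Fin 2) → ℤ)
    (hd : ∀ i, 0 ≤ d i)
    (h : c • E = Nᵀ * Matrix.diagonal d * N) :
    (E.map (fun x : ℤ => (x : ℂ))).PosSemidef := by
  set B : Matrix (Fin 3 → Fin 2) (Fin 3 → Fin 2) ℂ := N.map (fun x : ℤ => (x : ℂ)) with hBdef
  have hB : (Bᴴ * Matrix.diagonal (fun i => ((d i : ℤ) : ℂ)) * B).PosSemidef := by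
    apply Matrix.PosSemidef.conjTranspose_mul_mul_same
    refine Matrix.posSemidef_diagonal_iff.mpr fun i => ?_
    rw [Complex.nonneg_iff]
    refine ⟨by simpa using (by exact_mod_cast hd i : (0:ℝ) ≤ ((d i : ℤ) : ℝ)), by simp⟩
  have key : E.map (fun x : ℤ => (x : ℂ)) =
      (((c : ℝ)⁻¹ : ℝ) : ℂ) • (Bᴴ * Matrix.diagonal (fun i => ((d i : ℤ) : ℂ)) * B) := by
    ext j l
    have hjl := congrFun (congrFun h j) l
    have hL : (c • E) j l = c * E j l := by simp [Matrix.smul_apply]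
    have hR : (Nᵀ * Matrix.diagonal d * N) j l = ∑ k, N k j * (d k * N k l) := by
      rw [mul_assoc, Matrix.mul_apply]
      exact Finset.sum_congr rfl fun k _ => by rw [Matrix.transpose_apply, Matrix.diagonal_mul]
    rw [hL, hR] at hjl
    have hRC : (Bᴴ * Matrix.diagonal (fun i => ((d i : ℤ) : ℂ)) * B) j l
        = ∑ k, (N k j : ℂ) * ((d k : ℂ) * (N k l : ℂ)) := by
      rw [mul_assoc, Matrix.mul_apply]
      refine Finset.sum_congr rfl fun k _ => ?_
      rw [Matrix.conjTranspose_apply, Matrix.diagonal_mul, hBdef]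
      simp [Matrix.map_apply]
    have hcast := congrArg (fun z : ℤ => (z : ℂ)) hjl
    push_cast at hcast
    rw [Matrix.map_apply, Matrix.smul_apply, hRC, smul_eq_mul]
    have hc' : ((c : ℝ) : ℂ) ≠ 0 := by
      simp only [ne_eq, Complex.ofReal_eq_zero, Int.cast_eq_zero]
      exact_mod_cast hc.ne'
    rw [Complex.ofReal_inv]
    field_simp
    rw [mul_comm]
    push_cast
    simpa only [mul_assoc] using hcast
  rw [key]
  exact psd_smul hB (by positivity)

private def Ne8 : Matrix (Fin 8) (Fin 8) ℤ := Matrix.of ![![1, 0, 0, 0, 0, 0, 0, 0],![0, 3, -1, 0, -1, 0, 0, 0],![0, 0, 2, 0, -1, 0, 0, 0],![0, 0, 0, 3, 0, -1, -1, 0],![0, 0, 0, 0, 1, 0, 0, 0],![0, 0, 0, 0, 0, 2, -1, 0],![0, 0, 0, 0, 0, 0, 1, 0],![0, 0, 0, 0, 0, 0, 0, 1]]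
private def de8 : Fin 8 → ℤ := ![6, 2, 4, 2, 12, 4, 12, 6]
private def Ne9 : Matrix (Fin 8) (Fin 8) ℤ := Matrix.of ![![1, 0, 0, 0, 0, 0, 0, 0],![0, 7, -2, 0, -2, 0, 0, 0],![0, 0, 5, 0, -2, 0, 0, 0],![0, 0, 0, 7, 0, -2, -2, 0],![0, 0, 0, 0, 1, 0, 0, 0],![0, 0, 0, 0, 0, 5, -2, 0],![0, 0, 0, 0, 0, 0, 1, 0],![0, 0, 0, 0, 0, 0, 0, 1]]
private def de9 : Fin 8 → ℤ := ![105, 5, 9, 5, 189, 9, 189, 105]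
private def Na08 : Matrix (Fin 8) (Fin 8) ℤ := Matrix.of ![![1, 0, 0, 0, 0, -1, -1, 0],![0, 3, -1, 0, 0, 0, 0, -1],![0, 0, 2, 0, 0, 0, 0, -1],![0, 0, 0, 1, 0, 0, 0, 0],![0, 0, 0, 0, 1, 0, 0, 0],![0, 0, 0, 0, 0, 1, -1, 0],![0, 0, 0, 0, 0, 0, 1, 0],![0, 0, 0, 0, 0, 0, 0, 1]]
private def da08 : Fin 8 → ℤ := ![6, 2, 4, 18, 18, 12, 0, 0]
private def Na09 : Matrix (Fin 8) (Fin 8) ℤ := Matrix.of ![![3, 0, 0, 0, 0, -2, -2, 0],![0, 7, -2, 0, 0, 0, 0, -2],![0, 0, 5, 0, 0, 0, 0, -2],![0, 0, 0, 1, 0, 0, 0, 0],![0, 0, 0, 0, 1, 0, 0, 0],![0, 0, 0, 0, 0, 17, -10, 0],![0, 0, 0, 0, 0, 0, 1, 0],![0, 0, 0, 0, 0, 0, 0, 1]]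
private def da09 : Fin 8 → ℤ := ![595, 255, 459, 12495, 12495, 35, 6615, 2499]
private def Na18 : Matrix (Fin 8) (Fin 8) ℤ := Matrix.of ![![1, 0, 0, -1, 0, 0, -1, 0],![0, 3, 0, 0, -1, 0, 0, -1],![0, 0, 1, 0, 0, 0, 0, 0],![0, 0, 0, 1, 0, 0, -1, 0],![0, 0, 0, 0, 2, 0, 0, -1],![0, 0, 0, 0, 0, 1, 0, 0],![0, 0, 0, 0, 0, 0, 1, 0],![0, 0, 0, 0, 0, 0, 0, 1]]
private def da18 : Fin 8 → ℤ := ![6, 2, 18, 12, 4, 18, 0, 0]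
private def Na19 : Matrix (Fin 8) (Fin 8) ℤ := Matrix.of ![![3, 0, 0, -2, 0, 0, -2, 0],![0, 7, 0, 0, -2, 0, 0, -2],![0, 0, 1, 0, 0, 0, 0, 0],![0, 0, 0, 17, 0, 0, -10, 0],![0, 0, 0, 0, 5, 0, 0, -2],![0, 0, 0, 0, 0, 1, 0, 0],![0, 0, 0, 0, 0, 0, 1, 0],![0, 0, 0, 0, 0, 0, 0, 1]]
private def da19 : Fin 8 → ℤ := ![595, 255, 12495, 35, 459, 12495, 6615, 2499]
private def Na018 : Matrix (Fin 8) (Fin 8) ℤ := Matrix.of ![![1, 0, 0, -1, 0, -1, 0, 0],![0, 1, 0, 0, 0, 0, 0, 0],![0, 0, 3, 0, -1, 0, 0, -1],![0, 0, 0, 1, 0, -1, 0, 0],![0, 0, 0, 0, 2, 0, 0, -1],![0, 0, 0, 0, 0, 1, 0, 0],![0, 0, 0, 0, 0, 0, 1, 0],![0, 0, 0, 0, 0, 0, 0, 1]]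
private def da018 : Fin 8 → ℤ := ![6, 18, 2, 12, 4, 0, 18, 0]
private def Na019 : Matrix (Fin 8) (Fin 8) ℤ := Matrix.of ![![3, 0, 0, -2, 0, -2, 0, 0],![0, 1, 0, 0, 0, 0, 0, 0],![0, 0, 7, 0, -2, 0, 0, -2],![0, 0, 0, 17, 0, -10, 0, 0],![0, 0, 0, 0, 5, 0, 0, -2],![0, 0, 0, 0, 0, 1, 0, 0],![0, 0, 0, 0, 0, 0, 1, 0],![0, 0, 0, 0, 0, 0, 0, 1]]
private def da019 : Fin 8 → ℤ := ![595, 12495, 255, 35, 459, 6615, 12495, 2499]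
private def Na28 : Matrix (Fin 8) (Fin 8) ℤ := Matrix.of ![![1, 0, 0, -1, 0, -1, 0, 0],![0, 1, 0, 0, 0, 0, 0, 0],![0, 0, 3, 0, -1, 0, 0, -1],![0, 0, 0, 1, 0, -1, 0, 0],![0, 0, 0, 0, 2, 0, 0, -1],![0, 0, 0, 0, 0, 1, 0, 0],![0, 0, 0, 0, 0, 0, 1, 0],![0, 0, 0, 0, 0, 0, 0, 1]]
private def da28 : Fin 8 → ℤ := ![6, 18, 2, 12, 4, 0, 18, 0]
private def Na29 : Matrix (Fin 8) (Fin 8) ℤ := Matrix.of ![![3, 0, 0, -2, 0, -2, 0, 0],![0, 1, 0, 0, 0, 0, 0, 0],![0, 0, 7, 0, -2, 0, 0, -2],![0, 0, 0, 17, 0, -10, 0, 0],![0, 0, 0, 0, 5, 0, 0, -2],![0, 0, 0, 0, 0, 1, 0, 0],![0, 0, 0, 0, 0, 0, 1, 0],![0, 0, 0, 0, 0, 0, 0, 1]]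
private def da29 : Fin 8 → ℤ := ![595, 12495, 255, 35, 459, 6615, 12495, 2499]
private def Na028 : Matrix (Fin 8) (Fin 8) ℤ := Matrix.of ![![1, 0, 0, -1, 0, 0, -1, 0],![0, 3, 0, 0, -1, 0, 0, -1],![0, 0, 1, 0, 0, 0, 0, 0],![0, 0, 0, 1, 0, 0, -1, 0],![0, 0, 0, 0, 2, 0, 0, -1],![0, 0, 0, 0, 0, 1, 0, 0],![0, 0, 0, 0, 0, 0, 1, 0],![0, 0, 0, 0, 0, 0, 0, 1]]
private def da028 : Fin 8 → ℤ := ![6, 2, 18, 12, 4, 18, 0, 0]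
private def Na029 : Matrix (Fin 8) (Fin 8) ℤ := Matrix.of ![![3, 0, 0, -2, 0, 0, -2, 0],![0, 7, 0, 0, -2, 0, 0, -2],![0, 0, 1, 0, 0, 0, 0, 0],![0, 0, 0, 17, 0, 0, -10, 0],![0, 0, 0, 0, 5, 0, 0, -2],![0, 0, 0, 0, 0, 1, 0, 0],![0, 0, 0, 0, 0, 0, 1, 0],![0, 0, 0, 0, 0, 0, 0, 1]]
private def da029 : Fin 8 → ℤ := ![595, 255, 12495, 35, 459, 12495, 6615, 2499]
private def Na128 : Matrix (Fin 8) (Fin 8) ℤ := Matrix.of ![![1, 0, 0, 0, 0, -1, -1, 0],![0, 3, -1, 0, 0, 0, 0, -1],![0, 0, 2, 0, 0, 0, 0, -1],![0, 0, 0, 1, 0, 0, 0, 0],![0, 0, 0, 0, 1, 0, 0, 0],![0, 0, 0, 0, 0, 1, -1, 0],![0, 0, 0, 0, 0, 0, 1, 0],![0, 0, 0, 0, 0, 0, 0, 1]]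
private def da128 : Fin 8 → ℤ := ![6, 2, 4, 18, 18, 12, 0, 0]
private def Na129 : Matrix (Fin 8) (Fin 8) ℤ := Matrix.of ![![3, 0, 0, 0, 0, -2, -2, 0],![0, 7, -2, 0, 0, 0, 0, -2],![0, 0, 5, 0, 0, 0, 0, -2],![0, 0, 0, 1, 0, 0, 0, 0],![0, 0, 0, 0, 1, 0, 0, 0],![0, 0, 0, 0, 0, 17, -10, 0],![0, 0, 0, 0, 0, 0, 1, 0],![0, 0, 0, 0, 0, 0, 0, 1]]
private def da129 : Fin 8 → ℤ := ![595, 255, 459, 12495, 12495, 35, 6615, 2499]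
private def Nu8 : Matrix (Fin 8) (Fin 8) ℤ := Matrix.of ![![1, 0, 0, 0, 0, 0, 0, 0],![0, 3, -1, 0, -1, 0, 0, 0],![0, 0, 2, 0, -1, 0, 0, 0],![0, 0, 0, 3, 0, -1, -1, 0],![0, 0, 0, 0, 1, 0, 0, 0],![0, 0, 0, 0, 0, 2, -1, 0],![0, 0, 0, 0, 0, 0, 1, 0],![0, 0, 0, 0, 0, 0, 0, 1]]
private def du8 : Fin 8 → ℤ := ![6, 2, 4, 2, 12, 4, 12, 6]
private def Nu9 : Matrix (Fin 8) (Fin 8) ℤ := Matrix.of ![![1, 0, 0, 0, 0, 0, 0, 0],![0, 7, -2, 0, -2, 0, 0, 0],![0, 0, 5, 0, -2, 0, 0, 0],![0, 0, 0, 7, 0, -2, -2, 0],![0, 0, 0, 0, 1, 0, 0, 0],![0, 0, 0, 0, 0, 5, -2, 0],![0, 0, 0, 0, 0, 0, 1, 0],![0, 0, 0, 0, 0, 0, 0, 1]]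
private def du9 : Fin 8 → ℤ := ![105, 5, 9, 5, 189, 9, 189, 105]

private lemma psdE8 (I : Finset (Fin 3)) :
    (((8:ℤ) • 1 - Km I).map fun x : ℤ => (x : ℂ)).PosSemidef := by
  fin_cases I
  · exact psd_of_cert 3 (by norm_num) (lift Ne8) (liftv de8) (by decide) (by decide)
  · exact psd_of_cert 3 (by norm_num) (lift Na08) (liftv da08) (by decide) (by decide)
  · exact psd_of_cert 3 (by norm_num) (lift Na18) (liftv da18) (by decide) (by decide)
  · exact psd_of_cert 3 (by norm_num) (lift Na018) (liftv da018) (by decide) (by decide)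
  · exact psd_of_cert 3 (by norm_num) (lift Na28) (liftv da28) (by decide) (by decide)
  · exact psd_of_cert 3 (by norm_num) (lift Na028) (liftv da028) (by decide) (by decide)
  · exact psd_of_cert 3 (by norm_num) (lift Na128) (liftv da128) (by decide) (by decide)
  · exact psd_of_cert 3 (by norm_num) (lift Nu8) (liftv du8) (by decide) (by decide)

private lemma psdE9 (I : Finset (Fin 3)) :
    (((9:ℤ) • 1 - Km I).map fun x : ℤ => (x : ℂ)).PosSemidef := by
  fin_cases I
  · exact psd_of_cert 35 (by norm_num) (lift Ne9) (liftv de9) (by decide) (by decide)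
  · exact psd_of_cert 1785 (by norm_num) (lift Na09) (liftv da09) (by decide) (by decide)
  · exact psd_of_cert 1785 (by norm_num) (lift Na19) (liftv da19) (by decide) (by decide)
  · exact psd_of_cert 1785 (by norm_num) (lift Na019) (liftv da019) (by decide) (by decide)
  · exact psd_of_cert 1785 (by norm_num) (lift Na29) (liftv da29) (by decide) (by decide)
  · exact psd_of_cert 1785 (by norm_num) (lift Na029) (liftv da029) (by decide) (by decide)
  · exact psd_of_cert 1785 (by norm_num) (lift Na129) (liftv da129) (by decide) (by decide)
  · exact psd_of_cert 35 (by norm_num) (lift Nu9) (liftv du9) (by decide) (by decide)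


local notation "conj'" => starRingEnd ℂ

-- Gram determinant rank-2 identity with unit norms
private lemma gram3' (a0 a1 b0 b1 c0 c1 a0' a1' b0' b1' c0' c1' : ℂ)
    (ha : a0*a0' + a1*a1' = 1) (hb : b0*b0' + b1*b1' = 1) (hc : c0*c0' + c1*c1' = 1) :
    (a0*b0'+a1*b1')*(b0*c0'+b1*c1')*(c0*a0'+c1*a1')
      + (b0*a0'+b1*a1')*(c0*b0'+c1*b1')*(a0*c0'+a1*c1')
    = (a0*b0'+a1*b1')*(b0*a0'+b1*a1') + (b0*c0'+b1*c1')*(c0*b0'+c1*b1')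
      + (a0*c0'+a1*c1')*(c0*a0'+c1*a1') - 1 := by
  linear_combination ((b0*c0'+b1*c1')*(c0*b0'+c1*b1') - (b0*b0'+b1*b1')*(c0*c0'+c1*c1'))*ha +
    ((a0*c0'+a1*c1')*(c0*a0'+c1*a1') - (c0*c0'+c1*c1'))*hb +
    ((a0*b0'+a1*b1')*(b0*a0'+b1*a1') - 1)*hc

-- trace identity
private lemma trace3' (a0 a1 b0 b1 c0 c1 a0' a1' b0' b1' c0' c1' : ℂ)
    (ha : a0*a0' + a1*a1' = 1) (hb : b0*b0' + b1*b1' = 1) (hc : c0*c0' + c1*c1' = 1) :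
    2*((a0*b0'+a1*b1')*(b0*a0'+b1*a1') + (b0*c0'+b1*c1')*(c0*b0'+c1*b1')
        + (a0*c0'+a1*c1')*(c0*a0'+c1*a1')) + 3
    = (a0*a0'+b0*b0'+c0*c0')^2 + (a1*a1'+b1*b1'+c1*c1')^2
      + 2*((a0*a1'+b0*b1'+c0*c1')*(a1*a0'+b1*b0'+c1*c0')) := by
  linear_combination (-((a0*a0'+a1*a1') + 1))*ha + (-((b0*b0'+b1*b1') + 1))*hb + (-((c0*c0'+c1*c1') + 1))*hc

private lemma mul_conj_norm (z : ℂ) : z * conj' z = ((‖z‖ : ℝ) : ℂ)^2 := by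
  rw [Complex.mul_conj, Complex.normSq_eq_norm_sq, Complex.ofReal_pow]

private lemma permSum_bound (F : Fin 3 → Fin 2 → ℂ) (hF : ∀ i, ∑ m, ‖F i m‖^2 = 1) :
    ∃ S : ℝ, 3/4 ≤ S ∧
      ∑ σ : Equiv.Perm (Fin 3), ∏ i : Fin 3, (∑ m, F i m * conj' (F (σ i) m))
        = ((2*S : ℝ) : ℂ) := by
  have hnc : ∀ i, F i 0 * conj' (F i 0) + F i 1 * conj' (F i 1) = 1 := by
    intro i
    have h := hF i
    rw [Fin.sum_univ_two] at h
    rw [mul_conj_norm, mul_conj_norm, ← Complex.ofReal_pow, ← Complex.ofReal_pow,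
      ← Complex.ofReal_add, h, Complex.ofReal_one]
  set U : ℂ := F 0 0 * conj' (F 1 0) + F 0 1 * conj' (F 1 1) with hUdef
  set V : ℂ := F 1 0 * conj' (F 2 0) + F 1 1 * conj' (F 2 1) with hVdef
  set W : ℂ := F 0 0 * conj' (F 2 0) + F 0 1 * conj' (F 2 1) with hWdef
  set M : ℂ := F 0 0 * conj' (F 0 1) + F 1 0 * conj' (F 1 1) + F 2 0 * conj' (F 2 1) with hMdef
  have hCU : conj' U = F 1 0 * conj' (F 0 0) + F 1 1 * conj' (F 0 1) := by
    rw [hUdef]; simp [_root_.map_add, _root_.map_mul, Complex.conj_conj]; ring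
  have hCV : conj' V = F 2 0 * conj' (F 1 0) + F 2 1 * conj' (F 1 1) := by
    rw [hVdef]; simp [_root_.map_add, _root_.map_mul, Complex.conj_conj]; ring
  have hCW : conj' W = F 2 0 * conj' (F 0 0) + F 2 1 * conj' (F 0 1) := by
    rw [hWdef]; simp [_root_.map_add, _root_.map_mul, Complex.conj_conj]; ring
  have hCM : conj' M = F 0 1 * conj' (F 0 0) + F 1 1 * conj' (F 1 0) + F 2 1 * conj' (F 2 0) := by
    rw [hMdef]; simp [_root_.map_add, _root_.map_mul, Complex.conj_conj]; ring
  have e1 : (F 0 0 * conj' (F 1 0) + F 0 1 * conj' (F 1 1)) *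
      (F 1 0 * conj' (F 0 0) + F 1 1 * conj' (F 0 1)) = ((‖U‖ : ℝ) : ℂ)^2 := by
    rw [← hUdef, ← hCU, mul_conj_norm U]
  have e2 : (F 1 0 * conj' (F 2 0) + F 1 1 * conj' (F 2 1)) *
      (F 2 0 * conj' (F 1 0) + F 2 1 * conj' (F 1 1)) = ((‖V‖ : ℝ) : ℂ)^2 := by
    rw [← hVdef, ← hCV, mul_conj_norm V]
  have e3 : (F 0 0 * conj' (F 2 0) + F 0 1 * conj' (F 2 1)) *
      (F 2 0 * conj' (F 0 0) + F 2 1 * conj' (F 0 1)) = ((‖W‖ : ℝ) : ℂ)^2 := by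
    rw [← hWdef, ← hCW, mul_conj_norm W]
  refine ⟨‖U‖^2 + ‖V‖^2 + ‖W‖^2, ?_, ?_⟩
  · -- the bound
    have key2 := trace3' (F 0 0) (F 0 1) (F 1 0) (F 1 1) (F 2 0) (F 2 1)
      (conj' (F 0 0)) (conj' (F 0 1)) (conj' (F 1 0)) (conj' (F 1 1)) (conj' (F 2 0)) (conj' (F 2 1))
      (hnc 0) (hnc 1) (hnc 2)
    have e4 : (F 0 0 * conj' (F 0 1) + F 1 0 * conj' (F 1 1) + F 2 0 * conj' (F 2 1)) *
        (F 0 1 * conj' (F 0 0) + F 1 1 * conj' (F 1 0) + F 2 1 * conj' (F 2 0)) = ((‖M‖ : ℝ) : ℂ)^2 := by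
      rw [← hMdef, ← hCM, mul_conj_norm M]
    have e5 : F 0 0 * conj' (F 0 0) + F 1 0 * conj' (F 1 0) + F 2 0 * conj' (F 2 0)
        = ((‖F 0 0‖^2 + ‖F 1 0‖^2 + ‖F 2 0‖^2 : ℝ) : ℂ) := by
      rw [mul_conj_norm, mul_conj_norm, mul_conj_norm]; push_cast; ring
    have e6 : F 0 1 * conj' (F 0 1) + F 1 1 * conj' (F 1 1) + F 2 1 * conj' (F 2 1)
        = ((‖F 0 1‖^2 + ‖F 1 1‖^2 + ‖F 2 1‖^2 : ℝ) : ℂ) := by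
      rw [mul_conj_norm, mul_conj_norm, mul_conj_norm]; push_cast; ring
    rw [e1, e2, e3, e4, e5, e6] at key2
    have key4 : 2*(‖U‖^2 + ‖V‖^2 + ‖W‖^2) + 3
        = (‖F 0 0‖^2 + ‖F 1 0‖^2 + ‖F 2 0‖^2)^2 + (‖F 0 1‖^2 + ‖F 1 1‖^2 + ‖F 2 1‖^2)^2
            + 2*‖M‖^2 := by exact_mod_cast key2
    have h0 := hF 0; have h1 := hF 1; have h2 := hF 2
    rw [Fin.sum_univ_two] at h0 h1 h2
    nlinarith [sq_nonneg ((‖F 0 0‖^2 + ‖F 1 0‖^2 + ‖F 2 0‖^2) - (‖F 0 1‖^2 + ‖F 1 1‖^2 + ‖F 2 1‖^2)),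
      sq_nonneg ‖M‖]
  · -- the value
    have huniv : (Finset.univ : Finset (Equiv.Perm (Fin 3))) =
        {1, Equiv.swap 0 1, Equiv.swap 0 2, Equiv.swap 1 2,
         Equiv.swap 0 1 * Equiv.swap 1 2, Equiv.swap 1 2 * Equiv.swap 0 1} := by decide
    rw [huniv]
    rw [Finset.sum_insert (by decide), Finset.sum_insert (by decide),
      Finset.sum_insert (by decide), Finset.sum_insert (by decide),
      Finset.sum_insert (by decide), Finset.sum_singleton]
    have p1 : ∀ i : Fin 3, (1 : Equiv.Perm (Fin 3)) i = i := fun i => rfl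
    have q1 : (Equiv.swap (0:Fin 3) 1) 0 = 1 := by decide
    have q2 : (Equiv.swap (0:Fin 3) 1) 1 = 0 := by decide
    have q3 : (Equiv.swap (0:Fin 3) 1) 2 = 2 := by decide
    have r1 : (Equiv.swap (0:Fin 3) 2) 0 = 2 := by decide
    have r2 : (Equiv.swap (0:Fin 3) 2) 1 = 1 := by decide
    have r3 : (Equiv.swap (0:Fin 3) 2) 2 = 0 := by decide
    have s1 : (Equiv.swap (1:Fin 3) 2) 0 = 0 := by decide
    have s2 : (Equiv.swap (1:Fin 3) 2) 1 = 2 := by decide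
    have s3 : (Equiv.swap (1:Fin 3) 2) 2 = 1 := by decide
    have t1 : (⇑(Equiv.swap (0:Fin 3) 1) ∘ ⇑(Equiv.swap (1:Fin 3) 2)) 0 = 1 := by decide
    have t2 : (⇑(Equiv.swap (0:Fin 3) 1) ∘ ⇑(Equiv.swap (1:Fin 3) 2)) 1 = 2 := by decide
    have t3 : (⇑(Equiv.swap (0:Fin 3) 1) ∘ ⇑(Equiv.swap (1:Fin 3) 2)) 2 = 0 := by decide
    have w1 : (⇑(Equiv.swap (1:Fin 3) 2) ∘ ⇑(Equiv.swap (0:Fin 3) 1)) 0 = 2 := by decide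
    have w2 : (⇑(Equiv.swap (1:Fin 3) 2) ∘ ⇑(Equiv.swap (0:Fin 3) 1)) 1 = 0 := by decide
    have w3 : (⇑(Equiv.swap (1:Fin 3) 2) ∘ ⇑(Equiv.swap (0:Fin 3) 1)) 2 = 1 := by decide
    simp only [Fin.prod_univ_three, Equiv.Perm.coe_mul, p1, q1, q2, q3, r1, r2, r3, s1, s2, s3,
      t1, t2, t3, w1, w2, w3, Fin.sum_univ_two]
    rw [hnc 0, hnc 1, hnc 2]
    have key1 := gram3' (F 0 0) (F 0 1) (F 1 0) (F 1 1) (F 2 0) (F 2 1)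
      (conj' (F 0 0)) (conj' (F 0 1)) (conj' (F 1 0)) (conj' (F 1 1)) (conj' (F 2 0)) (conj' (F 2 1))
      (hnc 0) (hnc 1) (hnc 2)
    push_cast
    linear_combination key1 + 2*e1 + 2*e2 + 2*e3

private lemma swap_sum_prod (h : Fin 3 → Fin 2 → ℂ) :
    ∑ l : Fin 3 → Fin 2, ∏ i, h i (l i) = ∏ i : Fin 3, ∑ m, h i m := by
  rw [Finset.prod_univ_sum, Fintype.piFinset_univ]

private lemma sum_reduce (f : Fin 3 → Fin 2 → ℂ)
    (Pm : Matrix (Fin 3 → Fin 2) (Fin 3 → Fin 2) ℂ)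
    (hPm : ∀ j l, Pm j l = ((1 / (Nat.factorial 3 : ℝ) : ℝ) : ℂ) *
      ((Finset.univ.filter (fun σ : Equiv.Perm (Fin 3) => j = l ∘ σ)).card : ℂ)) :
    ∑ j, ∑ l, Pm j l * ((∏ i, f i (l i)) * conj' (∏ i, f i (j i)))
    = ((1 / (Nat.factorial 3 : ℝ) : ℝ) : ℂ) *
        ∑ σ : Equiv.Perm (Fin 3), ∏ i : Fin 3, (∑ m, f i m * conj' (f (σ i) m)) := by
  set k : ℂ := ((1 / (Nat.factorial 3 : ℝ) : ℝ) : ℂ) with hk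
  have hmain : ∀ S X : ℂ, k * S * X = S * (k * X) := by intros; ring
  have step1 : ∀ j l : Fin 3 → Fin 2, Pm j l * ((∏ i, f i (l i)) * conj' (∏ i, f i (j i)))
      = ∑ σ : Equiv.Perm (Fin 3), (if j = l ∘ σ then (1:ℂ) else 0) *
          (k * ((∏ i, f i (l i)) * conj' (∏ i, f i (j i)))) := by
    intro j l
    rw [hPm j l, Finset.card_filter]
    push_cast
    rw [hmain, Finset.sum_mul]
  calc ∑ j, ∑ l, Pm j l * ((∏ i, f i (l i)) * conj' (∏ i, f i (j i)))
      = ∑ j : Fin 3 → Fin 2, ∑ l : Fin 3 → Fin 2, ∑ σ : Equiv.Perm (Fin 3),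
          (if j = l ∘ σ then (1:ℂ) else 0) *
          (k * ((∏ i, f i (l i)) * conj' (∏ i, f i (j i)))) := by
        exact Finset.sum_congr rfl fun j _ => Finset.sum_congr rfl fun l _ => step1 j l
    _ = ∑ j : Fin 3 → Fin 2, ∑ σ : Equiv.Perm (Fin 3), ∑ l : Fin 3 → Fin 2,
          (if j = l ∘ σ then (1:ℂ) else 0) *
          (k * ((∏ i, f i (l i)) * conj' (∏ i, f i (j i)))) := by
        exact Finset.sum_congr rfl fun j _ => Finset.sum_comm
    _ = ∑ σ : Equiv.Perm (Fin 3), ∑ j : Fin 3 → Fin 2, ∑ l : Fin 3 → Fin 2,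
          (if j = l ∘ σ then (1:ℂ) else 0) *
          (k * ((∏ i, f i (l i)) * conj' (∏ i, f i (j i)))) := Finset.sum_comm
    _ = ∑ σ : Equiv.Perm (Fin 3), ∑ l : Fin 3 → Fin 2, ∑ j : Fin 3 → Fin 2,
          (if j = l ∘ σ then (1:ℂ) else 0) *
          (k * ((∏ i, f i (l i)) * conj' (∏ i, f i (j i)))) := by
        exact Finset.sum_congr rfl fun σ _ => Finset.sum_comm
    _ = ∑ σ : Equiv.Perm (Fin 3), ∑ l : Fin 3 → Fin 2,
          k * ((∏ i, f i (l i)) * conj' (∏ i, f i (l (σ i)))) := by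
        refine Finset.sum_congr rfl fun σ _ => Finset.sum_congr rfl fun l _ => ?_
        simp only [ite_mul, one_mul, zero_mul]
        rw [Finset.sum_ite_eq' Finset.univ (l ∘ σ)
          (fun j => k * ((∏ i, f i (l i)) * conj' (∏ i, f i (j i))))]
        simp [Function.comp]
    _ = ∑ σ : Equiv.Perm (Fin 3), k * ∑ l : Fin 3 → Fin 2,
          ∏ i, (f i (l i) * conj' (f (σ⁻¹ i) (l i))) := by
        refine Finset.sum_congr rfl fun σ _ => ?_
        rw [← Finset.mul_sum]
        congr 1
        refine Finset.sum_congr rfl fun l _ => ?_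
        have h2 : ∏ i, conj' (f i (l (σ i))) = ∏ i, conj' (f (σ⁻¹ i) (l i)) := by
          rw [← Equiv.prod_comp σ (fun i => conj' (f (σ⁻¹ i) (l i)))]
          exact Finset.prod_congr rfl fun i _ => by simp
        rw [map_prod, h2, ← Finset.prod_mul_distrib]
    _ = ∑ σ : Equiv.Perm (Fin 3), k * ∏ i : Fin 3, (∑ m, f i m * conj' (f (σ⁻¹ i) m)) := by
        exact Finset.sum_congr rfl fun σ _ =>
          congrArg (fun z => k * z) (swap_sum_prod (fun i m => f i m * conj' (f (σ⁻¹ i) m)))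
    _ = k * ∑ σ : Equiv.Perm (Fin 3), ∏ i : Fin 3, (∑ m, f i m * conj' (f (σ i) m)) := by
        rw [← Finset.mul_sum]
        refine congrArg (fun z => k * z) ?_
        refine Finset.sum_equiv (Equiv.inv (Equiv.Perm (Fin 3))) (by simp) fun σ _ => rfl


/-- **PPT entangled three-qubit Werner states.**
For every `p` with `1/5 < p < 1/4`, the generalized Werner state
`ρ(p) = (p/4)·Pm + ((1−p)/4)·(𝟙 − Pm)` on `(ℂ²)^{⊗3}` is not separable, yet all of
its partial transposes `ρ(p)^{Γ_I}`, `I ⊆ Fin 3`, are positive semidefinite. -/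
theorem werner_is_PPT_entangled (p : ℝ) (hp₁ : 1 / 5 < p) (hp₂ : p < 1 / 4)
    (Pm : Matrix (Fin 3 → Fin 2) (Fin 3 → Fin 2) ℂ)
    (hPm : ∀ j l, Pm j l = ((1 / (Nat.factorial 3 : ℝ) : ℝ) : ℂ) *
      ((Finset.univ.filter (fun σ : Equiv.Perm (Fin 3) => j = l ∘ σ)).card : ℂ))
    (ρ : Matrix (Fin 3 → Fin 2) (Fin 3 → Fin 2) ℂ)
    (hρ : ρ = ((p / 4 : ℝ) : ℂ) • Pm +
      (((1 - p) / 4 : ℝ) : ℂ) • ((1 : Matrix (Fin 3 → Fin 2) (Fin 3 → Fin 2) ℂ) - Pm)) :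
    (¬ ∃ (N : ℕ) (ω : Fin N → ℝ) (f : Fin N → Fin 3 → Fin 2 → ℂ),
      (∀ s, 0 < ω s) ∧ (∑ s, ω s = 1) ∧
      (∀ s i, ∑ m, ‖f s i m‖ ^ 2 = 1) ∧
      ρ = ∑ s, ((ω s : ℝ) : ℂ) •
        Matrix.of (fun j l : Fin 3 → Fin 2 =>
          (∏ i, f s i (j i)) * (starRingEnd ℂ) (∏ i, f s i (l i)))) ∧
    (∀ I : Finset (Fin 3),
      (Matrix.of (fun j l : Fin 3 → Fin 2 =>
        ρ (fun i => if i ∈ I then l i else j i)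
          (fun i => if i ∈ I then j i else l i))).PosSemidef) := by
  constructor
  · -- entanglement
    rintro ⟨n, ω, f, hω, hsum1, hnorm, hdec⟩
    have hk6 : ((1 / (Nat.factorial 3 : ℝ) : ℝ) : ℂ) = ((1/6 : ℝ) : ℂ) := by
      norm_num [Nat.factorial]
    -- trace identities for Pm
    have key_diag : ∑ j : Fin 3 → Fin 2, Pm j j = 4 := by
      simp only [hPm]
      rw [← Finset.mul_sum, ← Nat.cast_sum]
      rw [(by decide : (∑ j : Fin 3 → Fin 2,
        ((Finset.univ.filter (fun σ : Equiv.Perm (Fin 3) => j = j ∘ σ)).card)) = 24)]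
      rw [hk6]
      norm_num
    have key_one : ∑ j : Fin 3 → Fin 2, ∑ l : Fin 3 → Fin 2,
        Pm j l * (1 : Matrix (Fin 3 → Fin 2) (Fin 3 → Fin 2) ℂ) l j = 4 := by
      have h1 : ∀ j : Fin 3 → Fin 2, ∑ l : Fin 3 → Fin 2,
          Pm j l * (1 : Matrix (Fin 3 → Fin 2) (Fin 3 → Fin 2) ℂ) l j = Pm j j := by
        intro j
        simp only [Matrix.one_apply, mul_ite, mul_one, mul_zero]
        rw [Finset.sum_ite_eq' Finset.univ j (fun l => Pm j l)]
        simp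
      rw [Finset.sum_congr rfl fun j _ => h1 j, key_diag]
    have key_sq : ∑ j : Fin 3 → Fin 2, ∑ l : Fin 3 → Fin 2, Pm j l * Pm l j = 4 := by
      simp only [hPm]
      have hre : ∀ a b : ℂ, (((1 / (Nat.factorial 3 : ℝ) : ℝ) : ℂ)*a)*
          (((1 / (Nat.factorial 3 : ℝ) : ℝ) : ℂ)*b)
          = ((1 / (Nat.factorial 3 : ℝ) : ℝ) : ℂ)^2*(a*b) := by intros; ring
      simp_rw [hre, ← Nat.cast_mul, ← Finset.mul_sum, ← Nat.cast_sum]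
      rw [(by decide : (∑ j : Fin 3 → Fin 2, ∑ l : Fin 3 → Fin 2,
        ((Finset.univ.filter (fun σ : Equiv.Perm (Fin 3) => j = l ∘ σ)).card) *
        ((Finset.univ.filter (fun σ : Equiv.Perm (Fin 3) => l = j ∘ σ)).card)) = 144)]
      rw [hk6]
      norm_num
    -- value of the witness functional on ρ
    have hFρ : ∑ j : Fin 3 → Fin 2, ∑ l : Fin 3 → Fin 2, Pm j l * ρ l j = ((p : ℝ) : ℂ) := by
      have expand : ∀ j l : Fin 3 → Fin 2, Pm j l * ρ l j =
          (((2*p-1)/4 : ℝ) : ℂ)*(Pm j l * Pm l j)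
          + (((1-p)/4 : ℝ) : ℂ)*(Pm j l * (1 : Matrix (Fin 3 → Fin 2) (Fin 3 → Fin 2) ℂ) l j) := by
        intro j l
        rw [hρ]
        simp only [Matrix.add_apply, Matrix.smul_apply, Matrix.sub_apply, smul_eq_mul]
        push_cast
        ring
      simp_rw [expand, Finset.sum_add_distrib, ← Finset.mul_sum]
      rw [key_sq, key_one]
      push_cast
      ring
    -- value of the witness functional on the separable decomposition
    have hFdec : ∑ j : Fin 3 → Fin 2, ∑ l : Fin 3 → Fin 2, Pm j l * ρ l j
        = ∑ s, ((ω s : ℝ) : ℂ) * (∑ j : Fin 3 → Fin 2, ∑ l : Fin 3 → Fin 2,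
            Pm j l * ((∏ i, f s i (l i)) * (starRingEnd ℂ) (∏ i, f s i (j i)))) := by
      have expand : ∀ j l : Fin 3 → Fin 2, Pm j l * ρ l j =
          ∑ s, ((ω s : ℝ) : ℂ) *
            (Pm j l * ((∏ i, f s i (l i)) * (starRingEnd ℂ) (∏ i, f s i (j i)))) := by
        intro j l
        rw [hdec]
        simp only [Matrix.sum_apply, Matrix.smul_apply, Matrix.of_apply, smul_eq_mul]
        rw [Finset.mul_sum]
        exact Finset.sum_congr rfl fun s _ => by ring
      simp_rw [expand]
      rw [Finset.sum_congr rfl fun j (_ : j ∈ Finset.univ) => Finset.sum_comm]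
      rw [Finset.sum_comm]
      refine Finset.sum_congr rfl fun s _ => ?_
      rw [Finset.sum_congr rfl fun j (_ : j ∈ Finset.univ) =>
        (Finset.mul_sum Finset.univ (fun l => Pm j l *
          ((∏ i, f s i (l i)) * (starRingEnd ℂ) (∏ i, f s i (j i)))) (((ω s : ℝ) : ℂ))).symm]
      rw [← Finset.mul_sum]
    choose S hS1 hS2 using fun s => permSum_bound (f s) (hnorm s)
    have hval : ∀ s, ∑ j : Fin 3 → Fin 2, ∑ l : Fin 3 → Fin 2,
        Pm j l * ((∏ i, f s i (l i)) * (starRingEnd ℂ) (∏ i, f s i (j i)))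
        = ((S s / 3 : ℝ) : ℂ) := by
      intro s
      rw [sum_reduce (f s) Pm hPm, hS2 s, hk6]
      push_cast
      ring
    have hp : ((p : ℝ) : ℂ) = ((∑ s, ω s * (S s / 3) : ℝ) : ℂ) := by
      rw [← hFρ, hFdec]
      push_cast
      refine Finset.sum_congr rfl fun s _ => ?_
      rw [hval s]
      push_cast
      ring
    have hreal : p = ∑ s, ω s * (S s / 3) := Complex.ofReal_injective hp
    have hge : (1:ℝ)/4 ≤ ∑ s, ω s * (S s / 3) := by
      calc (1:ℝ)/4 = ∑ s, ω s * (1/4) := by rw [← Finset.sum_mul, hsum1, one_mul]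
        _ ≤ ∑ s, ω s * (S s / 3) := by
            refine Finset.sum_le_sum fun s _ => ?_
            have := hω s
            have := hS1 s
            nlinarith
    rw [← hreal] at hge
    linarith
  · -- PPT
    intro I
    have h1 : (0:ℝ) ≤ (5 - 20*p)/40 := by linarith
    have h2 : (0:ℝ) ≤ (20*p - 4)/48 := by linarith
    have hcomb : (Matrix.of (fun j l : Fin 3 → Fin 2 =>
        ρ (fun i => if i ∈ I then l i else j i)
          (fun i => if i ∈ I then j i else l i))) =
        (((5 - 20*p)/40 : ℝ) : ℂ) • (((8:ℤ) • 1 - Km I).map fun x : ℤ => (x : ℂ)) +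
        (((20*p - 4)/48 : ℝ) : ℂ) • (((9:ℤ) • 1 - Km I).map fun x : ℤ => (x : ℂ)) := by
      ext j l
      have hδ : ((fun i => if i ∈ I then l i else j i) =
          (fun i => if i ∈ I then j i else l i)) ↔ j = l := by
        constructor
        · intro h
          funext i
          have hi := congrFun h i
          by_cases hmem : i ∈ I
          · simp only [hmem, if_true] at hi; exact hi.symm
          · simp only [hmem, if_false] at hi; exact hi
        · intro h; subst h; rfl
      simp only [hρ, Matrix.of_apply, Matrix.add_apply, Matrix.smul_apply, Matrix.sub_apply,
        Matrix.one_apply, Matrix.map_apply, Km, hPm, hδ, smul_eq_mul, Nat.factorial]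
      split_ifs with h
      · push_cast; ring
      · push_cast; ring
    rw [hcomb]
    exact Matrix.PosSemidef.add (psd_smul (psdE8 I) h1) (psd_smul (psdE9 I) h2)
end
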